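/- arXiv:1507.05567 — 11 statements merged into one kernel-verified Lean document; each statement's English description precedes it below -/
import Mathlib

section
/- Let T > 0, let f : ℝ → ℝ be a continuous T-periodic function that is not identically zero, and let α ∈ (0,1). Then the Riemann–Liouville fractional integral I^α f (as a function on (0,∞)) is not T-periodic; that is, there exists t > 0 with I^α f(t+T) ≠ I^α f(t). -/
/-!
If `I^α f` were `T`-periodic, periodicity of `f` would turn `I^α f (t + T) - I^α f t` into a
multiple of `G t = ∫_{-T}^0 (t - u)^(α-1) f u du`, so `G` would vanish on `(0, ∞)`. Differentiating
`n` times in `t` (the factors `α - 1 - k` never vanish) gives `∫_{-T}^0 (1 - u)^(α-1-n) f u du = 0`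
for every `n`: the continuous function `(1 - u)^(α-1) f u` is orthogonal to all powers of the
injective function `(1 - u)⁻¹`. By Stone–Weierstrass it is then orthogonal to itself, so `f`
vanishes on `[-T, 0]`, hence everywhere by periodicity.
-/

open MeasureTheory intervalIntegral Set Polynomial Metric Filter

theorem IsCompact.exists_polynomial_comp_near {X : Type*} [TopologicalSpace X] {K : Set X}
    (hK : IsCompact K) {v g : X → ℝ} (hv : ContinuousOn v K) (hv_inj : InjOn v K)
    (hg : ContinuousOn g K) {ε : ℝ} (hε : 0 < ε) :
    ∃ p : ℝ[X], ∀ x ∈ K, |g x - p.eval (v x)| < ε := by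
  have := isCompact_iff_compactSpace.mp hK
  let v' : C(K, ℝ) := ⟨K.domRestrict v, hv.domRestrict⟩
  have hsep : (Algebra.adjoin ℝ {v'}).SeparatesPoints := fun x y hxy =>
    ⟨v', ⟨v', Algebra.subset_adjoin rfl, rfl⟩, fun h => hxy (Subtype.ext (hv_inj x.2 y.2 h))⟩
  obtain ⟨⟨q, hq⟩, hlt⟩ :=
    ContinuousMap.exists_mem_subalgebra_near_continuous_of_separatesPoints _ hsep
      (K.domRestrict g) hg.domRestrict ε hε
  obtain ⟨p, rfl⟩ := (Algebra.adjoin_singleton_eq_range_aeval ℝ v') ▸ hq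
  refine ⟨p, fun x hx => ?_⟩
  simpa [abs_sub_comm, aeval_continuousMap_apply, v'] using hlt ⟨x, hx⟩

theorem integral_eval_comp_mul_eq_zero {a b : ℝ} {v φ : ℝ → ℝ}
    (hv : ContinuousOn v (uIcc a b)) (hφ : IntervalIntegrable φ volume a b)
    (h : ∀ n : ℕ, ∫ x in a..b, v x ^ n * φ x = 0)
    (p : ℝ[X]) : ∫ x in a..b, p.eval (v x) * φ x = 0 := by
  induction p using Polynomial.induction_on' with
  | add p q hp hq =>
    have hint (r : ℝ[X]) : IntervalIntegrable (fun x => r.eval (v x) * φ x) volume a b :=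
      hφ.continuousOn_mul (r.continuous.comp_continuousOn hv)
    simp only [eval_add, add_mul]
    rw [integral_add (hint p) (hint q), hp, hq, add_zero]
  | monomial n c =>
    simp only [eval_monomial, mul_assoc, intervalIntegral.integral_const_mul, h, mul_zero]

theorem integral_mul_eq_zero_of_forall_integral_pow_mul_eq_zero {a b : ℝ} {v φ g : ℝ → ℝ}
    (hv : ContinuousOn v (uIcc a b)) (hv_inj : InjOn v (uIcc a b))
    (hφ : IntervalIntegrable φ volume a b) (hg : ContinuousOn g (uIcc a b))
    (h : ∀ n : ℕ, ∫ x in a..b, v x ^ n * φ x = 0) : ∫ x in a..b, g x * φ x = 0 := by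
  have hgφ : IntervalIntegrable (fun x => g x * φ x) volume a b := hφ.continuousOn_mul hg
  have hbound : ∀ ε > 0, |∫ x in a..b, g x * φ x| ≤ ε * |∫ x in a..b, ‖φ x‖| := by
    intro ε hε
    obtain ⟨p, hp⟩ := isCompact_uIcc.exists_polynomial_comp_near hv hv_inj hg hε
    have hpφ : IntervalIntegrable (fun x => p.eval (v x) * φ x) volume a b :=
      hφ.continuousOn_mul (p.continuous.comp_continuousOn hv)
    have hsub : ∫ x in a..b, g x * φ x = ∫ x in a..b, (g x - p.eval (v x)) * φ x := by
      simp only [sub_mul]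
      rw [integral_sub hgφ hpφ, integral_eval_comp_mul_eq_zero hv hφ h, sub_zero]
    rw [hsub, ← abs_of_pos hε, ← abs_mul, ← intervalIntegral.integral_const_mul]
    refine norm_integral_le_abs_of_norm_le (f := fun x => (g x - p.eval (v x)) * φ x)
      (ae_restrict_of_forall_mem measurableSet_uIoc fun x hx => ?_) (hφ.norm.const_mul ε)
    rw [norm_mul, Real.norm_eq_abs]
    gcongr
    exact (hp x (uIoc_subset_uIcc hx)).le
  set C := |∫ x in a..b, ‖φ x‖|
  have hC : 0 ≤ C := abs_nonneg _
  refine abs_nonpos_iff.mp (le_of_forall_pos_le_add fun δ hδ => ?_)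
  calc |∫ x in a..b, g x * φ x| ≤ δ / (C + 1) * C := hbound _ (by positivity)
    _ ≤ 0 + δ := by
      rw [zero_add, div_mul_eq_mul_div, div_le_iff₀ (by positivity)]
      nlinarith

theorem eqOn_zero_of_integral_mul_self_eq_zero {a b : ℝ} (hab : a < b) {φ : ℝ → ℝ}
    (hφ : ContinuousOn φ (Icc a b)) (h : ∫ x in a..b, φ x * φ x = 0) : EqOn φ 0 (Icc a b) := by
  rw [integral_eq_zero_iff_of_le_of_nonneg_ae hab.le
    (Eventually.of_forall fun x => mul_self_nonneg (φ x))
    ((hφ.mul hφ).intervalIntegrable_of_Icc hab.le),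
    Measure.restrict_congr_set Ioc_ae_eq_Icc] at h
  have hsq := Measure.eqOn_of_ae_eq h (hφ.mul hφ) continuousOn_const
    (by rw [interior_Icc, closure_Ioo hab.ne])
  exact fun x hx => mul_self_eq_zero.mp (hsq hx)

theorem eqOn_zero_of_forall_integral_pow_mul_eq_zero {a b : ℝ} (hab : a < b) {v φ : ℝ → ℝ}
    (hv : ContinuousOn v (Icc a b)) (hv_inj : InjOn v (Icc a b)) (hφ : ContinuousOn φ (Icc a b))
    (h : ∀ n : ℕ, ∫ x in a..b, v x ^ n * φ x = 0) : EqOn φ 0 (Icc a b) := by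
  refine eqOn_zero_of_integral_mul_self_eq_zero hab hφ ?_
  rw [← uIcc_of_le hab.le] at hv hv_inj hφ
  exact integral_mul_eq_zero_of_forall_integral_pow_mul_eq_zero hv hv_inj hφ.intervalIntegrable
    hφ h

theorem continuousOn_sub_rpow_const (x γ : ℝ) :
    ContinuousOn (fun u : ℝ => (x - u) ^ γ) (Iio x) :=
  (continuousOn_const.sub continuousOn_id).rpow_const fun _ hu => Or.inl (sub_pos.2 hu).ne'

theorem hasDerivAt_integral_sub_rpow_mul {a b t γ : ℝ} {f : ℝ → ℝ} (hab : a ≤ b) (hbt : b < t)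
    (hf : IntervalIntegrable f volume a b) :
    HasDerivAt (fun x => ∫ u in a..b, (x - u) ^ γ * f u)
      (γ * ∫ u in a..b, (t - u) ^ (γ - 1) * f u) t := by
  set δ := (t - b) / 2 with hδ_def
  have hδ : 0 < δ := half_pos (sub_pos.2 hbt)
  have hpos (x) (hx : x ∈ closedBall t δ) (u) (hu : u ∈ uIcc a b) : 0 < x - u := by
    rw [uIcc_of_le hab] at hu
    rw [mem_closedBall, Real.dist_eq, abs_le] at hx
    linarith [hu.2, hx.1]
  have hker (x) (hx : x ∈ closedBall t δ) (β : ℝ) :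
      ContinuousOn (fun u => (x - u) ^ β) (uIcc a b) :=
    (continuousOn_sub_rpow_const x β).mono fun u hu => sub_pos.1 (hpos x hx u hu)
  obtain ⟨C, hC⟩ :=
    ((isCompact_closedBall t δ).prod isCompact_uIcc).exists_bound_of_continuousOn
      (f := fun p : ℝ × ℝ => γ * (p.1 - p.2) ^ (γ - 1))
      (continuousOn_const.mul ((continuousOn_fst.sub continuousOn_snd).rpow_const
        fun p hp => Or.inl (hpos p.1 hp.1 p.2 hp.2).ne'))
  have ht : t ∈ closedBall t δ := mem_closedBall_self hδ.le
  have hball := ball_subset_closedBall (x := t) (ε := δ)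
  have := hasDerivAt_integral_of_dominated_loc_of_deriv_le (F := fun x u => (x - u) ^ γ * f u)
    (F' := fun x u => γ * (x - u) ^ (γ - 1) * f u) (bound := fun u => C * ‖f u‖)
    (ball_mem_nhds t hδ)
    (eventually_of_mem (ball_mem_nhds t hδ) fun x hx =>
      (hf.continuousOn_mul (hker x (hball hx) γ)).aestronglyMeasurable_restrict_uIoc)
    (hf.continuousOn_mul (hker t ht γ))
    (hf.continuousOn_mul
      (continuousOn_const.mul (hker t ht (γ - 1)))).aestronglyMeasurable_restrict_uIoc
    (Eventually.of_forall fun u hu x hx => ?_)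
    (hf.norm.const_mul C)
    (Eventually.of_forall fun u hu x hx => ?_)
  · simpa only [mul_assoc, intervalIntegral.integral_const_mul] using this.2
  · rw [norm_mul]
    exact mul_le_mul_of_nonneg_right (hC (x, u) ⟨hball hx, uIoc_subset_uIcc hu⟩) (norm_nonneg _)
  · have hxu := hpos x (hball hx) u (uIoc_subset_uIcc hu)
    simpa using ((Real.hasDerivAt_rpow_const (Or.inl hxu.ne')).comp x
      ((hasDerivAt_id x).sub_const u)).mul_const (f u)

theorem integral_sub_rpow_sub_natCast_mul_eq_zero {a b γ : ℝ} {f : ℝ → ℝ} (hab : a ≤ b)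
    (hf : IntervalIntegrable f volume a b) (hγ : ∀ n : ℕ, γ ≠ n)
    (h : ∀ x, b < x → ∫ u in a..b, (x - u) ^ γ * f u = 0) (n : ℕ) :
    ∀ x, b < x → ∫ u in a..b, (x - u) ^ (γ - n) * f u = 0 := by
  induction n with
  | zero => simpa using h
  | succ n ih =>
    intro x hx
    have hconst : (fun y => ∫ u in a..b, (y - u) ^ (γ - n) * f u) =ᶠ[nhds x] fun _ => 0 :=
      eventually_of_mem (Ioi_mem_nhds hx) ih
    have hderiv := (hasDerivAt_integral_sub_rpow_mul hab hx hf).unique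
      ((hasDerivAt_const x 0).congr_of_eventuallyEq hconst)
    rw [mul_eq_zero, sub_sub, ← Nat.cast_succ] at hderiv
    exact hderiv.resolve_left (sub_ne_zero.2 (hγ n))

theorem eqOn_zero_of_forall_integral_sub_rpow_mul_eq_zero {a b γ : ℝ} {f : ℝ → ℝ} (hab : a < b)
    (hf : ContinuousOn f (Icc a b)) (hγ : ∀ n : ℕ, γ ≠ n)
    (h : ∀ x, b < x → ∫ u in a..b, (x - u) ^ γ * f u = 0) : EqOn f 0 (Icc a b) := by
  obtain ⟨c, hbc⟩ : ∃ c, b < c := ⟨b + 1, lt_add_one b⟩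
  have hpos (u : ℝ) (hu : u ∈ Icc a b) : 0 < c - u := by linarith [hu.2]
  have hmoments (n : ℕ) : ∫ u in a..b, (c - u)⁻¹ ^ n * ((c - u) ^ γ * f u) = 0 := by
    refine Eq.trans (integral_congr fun u hu => ?_) (integral_sub_rpow_sub_natCast_mul_eq_zero
      hab.le (hf.intervalIntegrable_of_Icc hab.le) hγ h n c hbc)
    rw [uIcc_of_le hab.le] at hu
    simp only [Real.rpow_sub_natCast (hpos u hu).ne', inv_pow]
    ring
  have hzero := eqOn_zero_of_forall_integral_pow_mul_eq_zero hab
    ((continuousOn_const.sub continuousOn_id).inv₀ fun u hu => (hpos u hu).ne')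
    (inv_injective.comp (sub_right_injective (b := c))).injOn
    (((continuousOn_sub_rpow_const c γ).mono fun u hu => sub_pos.1 (hpos u hu)).mul hf) hmoments
  exact fun u hu => (mul_eq_zero.1 (hzero hu)).resolve_left (Real.rpow_pos_of_pos (hpos u hu) _).ne'

theorem intervalIntegrable_sub_rpow_mul {f : ℝ → ℝ} {β : ℝ} (hβ : -1 < β) {t a b : ℝ}
    (hf : ContinuousOn f (uIcc a b)) :
    IntervalIntegrable (fun u => (t - u) ^ β * f u) volume a b := by
  have hker : IntervalIntegrable (fun u : ℝ => (t - u) ^ β) volume a b := by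
    simpa using (intervalIntegrable_rpow' hβ (a := t - a) (b := t - b)).comp_sub_left t
  exact hker.mul_continuousOn hf

theorem Function.Periodic.integral_add_period_comp_sub_mul {f : ℝ → ℝ} {T : ℝ}
    (hper : Function.Periodic f T) (k : ℝ → ℝ) (t : ℝ) :
    ∫ s in (0 : ℝ)..(t + T), k (t + T - s) * f s = ∫ u in (-T)..t, k (t - u) * f u := by
  simpa [hper _] using
    (integral_comp_add_right (fun s => k (t + T - s) * f s) T (a := -T) (b := t)).symm

theorem Function.Periodic.eq_zero_of_eqOn_Ico {f : ℝ → ℝ} {T a : ℝ}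
    (hper : Function.Periodic f T) (hT : 0 < T) (h : EqOn f 0 (Ico a (a + T))) : f = 0 := by
  funext x
  obtain ⟨y, hy, hxy⟩ := hper.exists_mem_Ico hT x a
  rw [hxy, h hy]
  rfl

/-- The Riemann–Liouville fractional integral of order `α` cannot be `T`-periodic
when `f` is a nonzero continuous `T`-periodic function and `α ∈ (0,1)`. -/
theorem rl_integral_not_periodic (T : ℝ) (hT : 0 < T) (f : ℝ → ℝ)
    (hf : Continuous f) (hper : Function.Periodic f T) (hne : f ≠ 0)
    (α : ℝ) (hα : α ∈ Set.Ioo (0 : ℝ) 1) :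
    ∃ t : ℝ, 0 < t ∧
      (1 / Real.Gamma α) * ∫ s in (0 : ℝ)..(t + T), (t + T - s) ^ (α - 1) * f s ≠
      (1 / Real.Gamma α) * ∫ s in (0 : ℝ)..t, (t - s) ^ (α - 1) * f s := by
  by_contra! hcon
  have hβ : -1 < α - 1 := by linarith [hα.1]
  have hγ (n : ℕ) : α - 1 ≠ n := (lt_of_lt_of_le (by linarith [hα.2]) n.cast_nonneg).ne
  have htail (t : ℝ) (ht : 0 < t) : ∫ u in (-T)..0, (t - u) ^ (α - 1) * f u = 0 := by
    have h := mul_left_cancel₀ (one_div_pos.2 (Real.Gamma_pos_of_pos hα.1)).ne' (hcon t ht)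
    rw [hper.integral_add_period_comp_sub_mul (· ^ (α - 1)), ← integral_add_adjacent_intervals
      (b := 0) (intervalIntegrable_sub_rpow_mul hβ hf.continuousOn)
      (intervalIntegrable_sub_rpow_mul hβ hf.continuousOn)] at h
    linarith
  have hzero := eqOn_zero_of_forall_integral_sub_rpow_mul_eq_zero (neg_lt_zero.2 hT)
    hf.continuousOn hγ htail
  refine hne (hper.eq_zero_of_eqOn_Ico hT (a := -T) fun u hu => hzero ?_)
  exact Ico_subset_Icc_self (by rwa [neg_add_cancel] at hu)
end

section
/- Let T > 0 and let f : [0,∞) → ℝ be a continuous bounded function that is S-asymptotically T-periodic. Let (t_n) be a sequence of real numbers with t_n → +∞, and suppose that the translates f_{t_n}(t) = f(t + t_n) converge uniformly on every compact subset of [0,∞) to a function F : [0,∞) → ℝ. Then F is continuous and T-periodic, i.e. F(t+T) = F(t) for all t ≥ 0. -/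
/-!
On the closed set `[0, ∞)`, uniform convergence on compact subsets is locally uniform
convergence, so `F` is continuous as a limit of the translates, which are continuous on
`[0, ∞)` once `tₙ ≥ 0`. And `F (t + T) - F t` is the limit of `f (t + tₙ + T) - f (t + tₙ)`,
which tends to `0` because `t + tₙ → ∞`.
-/

open Filter Set Topology

theorem IsClosed.tendstoLocallyUniformlyOn_of_forall_isCompact {α β ι : Type*}
    [TopologicalSpace α] [WeaklyLocallyCompactSpace α] [UniformSpace β]
    {F : ι → α → β} {f : α → β} {p : Filter ι} {s : Set α} (hs : IsClosed s)
    (h : ∀ K ⊆ s, IsCompact K → TendstoUniformlyOn F f p K) :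
    TendstoLocallyUniformlyOn F f p s :=
  tendstoLocallyUniformlyOn_of_forall_exists_nhds fun x _ ↦
    let ⟨K, hK, hKx⟩ := exists_compact_mem_nhds x
    ⟨s ∩ K, inter_mem_nhdsWithin s hKx, h _ inter_subset_left (hK.inter_left hs)⟩

theorem eq_of_tendsto_translates_of_tendsto_sub {ι E : Type*} [AddCommGroup E]
    [TopologicalSpace E] [IsTopologicalAddGroup E] [T2Space E] {l : Filter ι} [l.NeBot]
    {g : ℝ → E} {T t : ℝ} {u : ι → ℝ} {a b : E}
    (hsap : Tendsto (fun s ↦ g (s + T) - g s) atTop (𝓝 0)) (hu : Tendsto u l atTop)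
    (ha : Tendsto (fun n ↦ g (t + u n)) l (𝓝 a))
    (hb : Tendsto (fun n ↦ g (t + T + u n)) l (𝓝 b)) : b = a := by
  have hdiff : Tendsto (fun n ↦ g (t + u n + T) - g (t + u n)) l (𝓝 0) :=
    hsap.comp (tendsto_atTop_add_const_left _ t hu)
  have hb' : Tendsto (fun n ↦ g (t + u n + T)) l (𝓝 b) := by
    simpa only [add_right_comm] using hb
  exact sub_eq_zero.mp (tendsto_nhds_unique (hb'.sub ha) hdiff)

theorem limit_of_translates_is_periodic_general (T : ℝ) (hT : 0 < T) (f F : ℝ → ℝ)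
    (hf : ContinuousOn f (Ici 0))
    (hsap : Tendsto (fun t : ℝ => f (t + T) - f t) atTop (nhds 0))
    (tseq : ℕ → ℝ) (htseq : Tendsto tseq atTop atTop)
    (hconv : ∀ K : Set ℝ, K ⊆ Ici 0 → IsCompact K →
      TendstoUniformlyOn (fun (n : ℕ) (t : ℝ) => f (t + tseq n)) F atTop K) :
    ContinuousOn F (Ici 0) ∧ ∀ t ∈ Ici (0 : ℝ), F (t + T) = F t := by
  have hlim : ∀ t ∈ Ici (0 : ℝ), Tendsto (fun n ↦ f (t + tseq n)) atTop (𝓝 (F t)) :=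
    fun t ht ↦ (hconv {t} (singleton_subset_iff.mpr ht) isCompact_singleton).tendsto_at rfl
  have htranslate_cont : ∀ᶠ n in atTop, ContinuousOn (fun t ↦ f (t + tseq n)) (Ici 0) := by
    filter_upwards [htseq.eventually_ge_atTop 0] with n hn
    exact hf.comp (continuous_add_const _).continuousOn
      fun s (hs : 0 ≤ s) ↦ (add_nonneg hs hn : 0 ≤ s + tseq n)
  refine ⟨(isClosed_Ici.tendstoLocallyUniformlyOn_of_forall_isCompact hconv).continuousOn
    htranslate_cont.frequently, fun t ht ↦ ?_⟩
  exact eq_of_tendsto_translates_of_tendsto_sub hsap htseq (hlim t ht)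
    (hlim _ (add_nonneg ht hT.le))

/-- If `f` is continuous, bounded and S-asymptotically `T`-periodic on `[0,∞)`,
and the translates `t ↦ f (t + tₙ)` (with `tₙ → ∞`) converge uniformly on compact
subsets of `[0,∞)` to `F`, then `F` is continuous and `T`-periodic on `[0,∞)`. -/
theorem limit_of_translates_is_periodic (T : ℝ) (hT : 0 < T) (f F : ℝ → ℝ)
    (hf : ContinuousOn f (Ici 0)) (hbdd : ∃ M : ℝ, ∀ t ∈ Ici (0 : ℝ), |f t| ≤ M)
    (hsap : Tendsto (fun t : ℝ => f (t + T) - f t) atTop (nhds 0))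
    (tseq : ℕ → ℝ) (htseq : Tendsto tseq atTop atTop)
    (hconv : ∀ K : Set ℝ, K ⊆ Ici 0 → IsCompact K →
      TendstoUniformlyOn (fun (n : ℕ) (t : ℝ) => f (t + tseq n)) F atTop K) :
    ContinuousOn F (Ici 0) ∧ ∀ t ∈ Ici (0 : ℝ), F (t + T) = F t :=
  limit_of_translates_is_periodic_general T hT f F hf hsap tseq htseq hconv
end

section
/- Let T > 0 and let f : [0,∞) → ℝ be a continuous bounded function that is S-asymptotically T-periodic and asymptotically almost periodic, i.e. f(t) = g(t) + h(t) for t ≥ 0, where g : ℝ → ℝ is almost periodic and h : [0,∞) → ℝ is continuous with h(t) → 0 as t → +∞. Then f is asymptotically T-periodic: there exist a continuous T-periodic function f₁ : ℝ → ℝ and a continuous function f₂ : [0,∞) → ℝ with f₂(t) → 0 as t → +∞ such that f = f₁ + f₂ on [0,∞). -/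
open Filter Set

/-- A continuous function `g : ℝ → ℝ` is almost periodic in the sense of Bohr if for every
`ε > 0` the set of `ε`-almost periods of `g` is relatively dense in `ℝ`. -/
def AlmostPeriodic (g : ℝ → ℝ) : Prop :=
  Continuous g ∧
    ∀ ε : ℝ, 0 < ε → ∃ l : ℝ, 0 < l ∧ ∀ a : ℝ,
      ∃ ξ ∈ Icc a (a + l), ∀ t : ℝ, |g (t + ξ) - g t| < ε

/-!
Subtracting the vanishing part `h` shows that `g (t + T) - g t → 0` as `t → ∞`.
This difference is again almost periodic, and an almost periodic function tending to `0` at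
`+∞` vanishes identically: its value at any `t` is repeated, up to `ε`, at points `t + ξ` as far
out as we like. Hence `g` is `T`-periodic, and `f = g + (f - g)` with `f - g = h` on `[0,∞)`.
-/

namespace AlmostPeriodic

/-- An `ε/2`-almost period of `g` is an `ε`-almost period of `t ↦ g (t + T) - g t`. -/
theorem sub_comp_add_const {g : ℝ → ℝ} (hg : AlmostPeriodic g) (T : ℝ) :
    AlmostPeriodic (fun t => g (t + T) - g t) := by
  refine ⟨(hg.1.comp (continuous_add_const T)).sub hg.1, fun ε hε => ?_⟩
  obtain ⟨l, hl, hap⟩ := hg.2 (ε / 2) (half_pos hε)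
  refine ⟨l, hl, fun a => ?_⟩
  obtain ⟨ξ, hξ, hgξ⟩ := hap a
  refine ⟨ξ, hξ, fun t => ?_⟩
  dsimp only
  rw [add_right_comm t ξ T]
  calc |g (t + T + ξ) - g (t + ξ) - (g (t + T) - g t)|
      = |(g (t + T + ξ) - g (t + T)) - (g (t + ξ) - g t)| := by ring_nf
    _ ≤ |g (t + T + ξ) - g (t + T)| + |g (t + ξ) - g t| := abs_sub _ _
    _ < ε / 2 + ε / 2 := add_lt_add (hgξ (t + T)) (hgξ t)
    _ = ε := add_halves ε

theorem eq_zero_of_tendsto_atTop {φ : ℝ → ℝ} (hφ : AlmostPeriodic φ)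
    (hlim : Tendsto φ atTop (nhds 0)) (t : ℝ) : φ t = 0 := by
  refine eq_of_forall_dist_le fun ε hε => ?_
  obtain ⟨N, hN⟩ := Metric.tendsto_atTop.mp hlim (ε / 2) (half_pos hε)
  obtain ⟨l, -, hap⟩ := hφ.2 (ε / 2) (half_pos hε)
  obtain ⟨ξ, hξ, hφξ⟩ := hap (N - t)
  have hfar : |φ (t + ξ)| < ε / 2 := by
    simpa [Real.dist_eq] using hN (t + ξ) (by linarith [hξ.1])
  have hnear : |φ t| - |φ (t + ξ)| ≤ |φ (t + ξ) - φ t| :=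
    (abs_sub_abs_le_abs_sub _ _).trans_eq (abs_sub_comm _ _)
  rw [Real.dist_eq, sub_zero]
  linarith [hφξ t]

theorem periodic_of_tendsto_sub_comp_add_const {g : ℝ → ℝ} (hg : AlmostPeriodic g) {T : ℝ}
    (hlim : Tendsto (fun t => g (t + T) - g t) atTop (nhds 0)) : Function.Periodic g T :=
  fun t => sub_eq_zero.mp ((hg.sub_comp_add_const T).eq_zero_of_tendsto_atTop hlim t)

end AlmostPeriodic

theorem tendsto_sub_comp_add_const_of_tendsto {h : ℝ → ℝ} (hh : Tendsto h atTop (nhds 0))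
    (T : ℝ) : Tendsto (fun t => h (t + T) - h t) atTop (nhds 0) := by
  simpa using (hh.comp (tendsto_atTop_add_const_right _ T tendsto_id)).sub hh

theorem s_asymp_and_asymp_almost_periodic_is_asymp_periodic_general (T : ℝ)
    (f : ℝ → ℝ) (hf : ContinuousOn f (Ici 0))
    (hsap : Tendsto (fun t : ℝ => f (t + T) - f t) atTop (nhds 0))
    (g h : ℝ → ℝ) (hg : AlmostPeriodic g)
    (hh0 : Tendsto h atTop (nhds 0))
    (hdecomp : ∀ t ∈ Ici (0 : ℝ), f t = g t + h t) :
    ∃ f₁ f₂ : ℝ → ℝ, Continuous f₁ ∧ Function.Periodic f₁ T ∧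
      ContinuousOn f₂ (Ici 0) ∧ Tendsto f₂ atTop (nhds 0) ∧
      ∀ t ∈ Ici (0 : ℝ), f t = f₁ t + f₂ t := by
  have hfgh : ∀ᶠ t in atTop, f t = g t + h t :=
    (eventually_ge_atTop 0).mono hdecomp
  have hg_sap : Tendsto (fun t => g (t + T) - g t) atTop (nhds 0) := by
    have hdiff := hsap.sub (tendsto_sub_comp_add_const_of_tendsto hh0 T)
    rw [sub_zero] at hdiff
    refine hdiff.congr' ?_
    filter_upwards [hfgh, (tendsto_atTop_add_const_right _ T tendsto_id).eventually hfgh]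
      with t ht htT
    rw [id_eq] at htT
    rw [ht, htT]
    ring
  refine ⟨g, f - g, hg.1, hg.periodic_of_tendsto_sub_comp_add_const hg_sap,
    hf.sub hg.1.continuousOn, hh0.congr' ?_, fun t _ => by simp⟩
  filter_upwards [hfgh] with t ht
  simp [ht]

/-- An S-asymptotically `T`-periodic, asymptotically almost periodic function on `[0,∞)`
is asymptotically `T`-periodic. -/
theorem s_asymp_and_asymp_almost_periodic_is_asymp_periodic (T : ℝ) (hT : 0 < T)
    (f : ℝ → ℝ) (hf : ContinuousOn f (Ici 0))
    (hbdd : ∃ M : ℝ, ∀ t ∈ Ici (0 : ℝ), |f t| ≤ M)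
    (hsap : Tendsto (fun t : ℝ => f (t + T) - f t) atTop (nhds 0))
    (g h : ℝ → ℝ) (hg : AlmostPeriodic g) (hh : ContinuousOn h (Ici 0))
    (hh0 : Tendsto h atTop (nhds 0))
    (hdecomp : ∀ t ∈ Ici (0 : ℝ), f t = g t + h t) :
    ∃ f₁ f₂ : ℝ → ℝ, Continuous f₁ ∧ Function.Periodic f₁ T ∧
      ContinuousOn f₂ (Ici 0) ∧ Tendsto f₂ atTop (nhds 0) ∧
      ∀ t ∈ Ici (0 : ℝ), f t = f₁ t + f₂ t :=
  s_asymp_and_asymp_almost_periodic_is_asymp_periodic_general T f hf hsap g h hg hh0 hdecomp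
end

section
/- Let T > 0, let f : ℝ → ℝ be a continuous T-periodic function bounded by ‖f‖_∞ = sup_t |f(t)|, and let α ∈ (0,1). Then for every t > 0 one has I^α f(t+T) − I^α f(t) = (1/Γ(α)) ∫₀ᵀ (t+T−s)^{α−1} f(s) ds, and consequently |I^α f(t+T) − I^α f(t)| ≤ (1/Γ(α)) · T · ‖f‖_∞ · t^{α−1}. -/
open MeasureTheory intervalIntegral

lemma kernel_integrable {α : ℝ} (h : -1 < α - 1) (c a b : ℝ) (f : ℝ → ℝ)
    (hf : Continuous f) :
    IntervalIntegrable (fun s => (c - s) ^ (α - 1) * f s) volume a b := by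
  have h1 : IntervalIntegrable (fun s : ℝ => (c - s) ^ (α - 1)) volume a b := by
    have := (intervalIntegrable_rpow' (a := c - a) (b := c - b) h).comp_sub_left c
    simpa using this
  exact h1.mul_continuousOn hf.continuousOn

/-- For a continuous `T`-periodic `f` bounded by `M = ‖f‖_∞` and `α ∈ (0,1)`, the
difference `I^α f (t+T) - I^α f (t)` equals `(1/Γ(α)) ∫₀ᵀ (t+T-s)^{α-1} f(s) ds`
and is bounded by `(1/Γ(α)) T M t^{α-1}` for every `t > 0`. -/
theorem rl_integral_difference_formula (T : ℝ) (hT : 0 < T) (f : ℝ → ℝ)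
    (hf : Continuous f) (hper : Function.Periodic f T)
    (M : ℝ) (hM : ∀ t : ℝ, |f t| ≤ M)
    (α : ℝ) (hα : α ∈ Set.Ioo (0 : ℝ) 1) :
    ∀ t : ℝ, 0 < t →
      ((1 / Real.Gamma α) * ∫ s in (0 : ℝ)..(t + T), (t + T - s) ^ (α - 1) * f s) -
        (1 / Real.Gamma α) * ∫ s in (0 : ℝ)..t, (t - s) ^ (α - 1) * f s =
        (1 / Real.Gamma α) * ∫ s in (0 : ℝ)..T, (t + T - s) ^ (α - 1) * f s ∧
      |((1 / Real.Gamma α) * ∫ s in (0 : ℝ)..(t + T), (t + T - s) ^ (α - 1) * f s) -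
        (1 / Real.Gamma α) * ∫ s in (0 : ℝ)..t, (t - s) ^ (α - 1) * f s| ≤
        (1 / Real.Gamma α) * T * M * t ^ (α - 1) := by
  obtain ⟨hα0, hα1⟩ := hα
  have hexp : -1 < α - 1 := by linarith
  intro t ht
  have hΓ : 0 < Real.Gamma α := Real.Gamma_pos_of_pos hα0
  have hΓ' : 0 ≤ 1 / Real.Gamma α := by positivity
  -- key equality of integrals
  have hsplit : (∫ s in (0:ℝ)..(t + T), (t + T - s) ^ (α - 1) * f s)
      = (∫ s in (0:ℝ)..T, (t + T - s) ^ (α - 1) * f s)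
        + ∫ s in T..(t + T), (t + T - s) ^ (α - 1) * f s :=
    (integral_add_adjacent_intervals (kernel_integrable hexp _ _ _ f hf)
      (kernel_integrable hexp _ _ _ f hf)).symm
  have htrans : (∫ s in T..(t + T), (t + T - s) ^ (α - 1) * f s)
      = ∫ s in (0:ℝ)..t, (t - s) ^ (α - 1) * f s := by
    have := intervalIntegral.integral_comp_add_right (a := (0:ℝ)) (b := t)
      (fun s => (t + T - s) ^ (α - 1) * f s) T
    rw [zero_add] at this
    rw [← this]
    refine intervalIntegral.integral_congr fun s _ => ?_
    have : t + T - (s + T) = t - s := by ring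
    rw [this, hper s]
  have heq : ((1 / Real.Gamma α) * ∫ s in (0:ℝ)..(t + T), (t + T - s) ^ (α - 1) * f s) -
      (1 / Real.Gamma α) * ∫ s in (0:ℝ)..t, (t - s) ^ (α - 1) * f s =
      (1 / Real.Gamma α) * ∫ s in (0:ℝ)..T, (t + T - s) ^ (α - 1) * f s := by
    rw [hsplit, htrans]; ring
  refine ⟨heq, ?_⟩
  rw [heq]
  -- bound
  have hMnonneg : 0 ≤ M := le_trans (abs_nonneg _) (hM 0)
  have hbound : ‖∫ s in (0:ℝ)..T, (t + T - s) ^ (α - 1) * f s‖ ≤ t ^ (α - 1) * M * |T - 0| := by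
    refine intervalIntegral.norm_integral_le_of_norm_le_const fun s hs => ?_
    rw [Set.uIoc_of_le hT.le] at hs
    have hs1 : 0 < s := hs.1
    have hs2 : s ≤ T := hs.2
    have hts : t ≤ t + T - s := by linarith
    have hker : (t + T - s) ^ (α - 1) ≤ t ^ (α - 1) :=
      Real.rpow_le_rpow_of_nonpos ht hts (by linarith)
    have hkpos : (0:ℝ) ≤ (t + T - s) ^ (α - 1) := Real.rpow_nonneg (by linarith) _
    calc ‖(t + T - s) ^ (α - 1) * f s‖ = (t + T - s) ^ (α - 1) * |f s| := by
          rw [Real.norm_eq_abs, abs_mul, abs_of_nonneg hkpos]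
      _ ≤ t ^ (α - 1) * M :=
          mul_le_mul hker (hM s) (abs_nonneg _) (Real.rpow_nonneg ht.le _)
  rw [abs_mul, abs_of_nonneg hΓ', ← Real.norm_eq_abs]
  calc (1 / Real.Gamma α) * |∫ s in (0:ℝ)..T, (t + T - s) ^ (α - 1) * f s|
      ≤ (1 / Real.Gamma α) * (t ^ (α - 1) * M * |T - 0|) := by
        exact mul_le_mul_of_nonneg_left hbound hΓ'
    _ = (1 / Real.Gamma α) * T * M * t ^ (α - 1) := by
        rw [sub_zero, abs_of_nonneg hT.le]; ring
end

section
/- Let T > 0, let f : ℝ → ℝ be a continuous T-periodic function, and let α ∈ (0,1). Then lim_{t→+∞} [I^α f(t+T) − I^α f(t)] = 0. -/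
open MeasureTheory intervalIntegral Filter

/-- For a continuous `T`-periodic `f` and `α ∈ (0,1)`, the fractional integral
`I^α f` satisfies `I^α f (t+T) - I^α f (t) → 0` as `t → +∞`. -/
theorem rl_integral_asymptotically_periodic_property (T : ℝ) (hT : 0 < T)
    (f : ℝ → ℝ) (hf : Continuous f) (hper : Function.Periodic f T)
    (α : ℝ) (hα : α ∈ Set.Ioo (0 : ℝ) 1) :
    Tendsto (fun t : ℝ =>
        ((1 / Real.Gamma α) * ∫ s in (0 : ℝ)..(t + T), (t + T - s) ^ (α - 1) * f s) -
        (1 / Real.Gamma α) * ∫ s in (0 : ℝ)..t, (t - s) ^ (α - 1) * f s)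
      atTop (nhds 0) := by
  obtain ⟨hα0, hα1⟩ := hα
  have hexp : α - 1 ≤ 0 := by linarith
  have hint : ∀ (t a b : ℝ), IntervalIntegrable (fun u => (t - u) ^ (α - 1) * f u) volume a b := by
    intro t a b
    have h1 : IntervalIntegrable (fun u : ℝ => (t - u) ^ (α - 1)) volume a b := by
      have := (intervalIntegrable_rpow' (a := t - a) (b := t - b) (r := α - 1)
        (by linarith)).comp_sub_left t
      simpa using this
    exact h1.mul_continuousOn hf.continuousOn
  have heq : ∀ t : ℝ,
      ((1 / Real.Gamma α) * ∫ s in (0:ℝ)..(t + T), (t + T - s) ^ (α - 1) * f s) -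
      (1 / Real.Gamma α) * ∫ s in (0:ℝ)..t, (t - s) ^ (α - 1) * f s
      = (1 / Real.Gamma α) * ∫ u in (-T)..(0:ℝ), (t - u) ^ (α - 1) * f u := by
    intro t
    have h1 : (∫ s in (0:ℝ)..(t + T), (t + T - s) ^ (α - 1) * f s)
        = ∫ u in (-T)..t, (t - u) ^ (α - 1) * f u := by
      have h0 := intervalIntegral.integral_comp_add_right (a := -T) (b := t)
        (fun s => (t + T - s) ^ (α - 1) * f s) T
      have h2 : (∫ u in (-T)..t, (t + T - (u + T)) ^ (α - 1) * f (u + T))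
          = ∫ u in (-T)..t, (t - u) ^ (α - 1) * f u := by
        apply intervalIntegral.integral_congr
        intro u _
        simp only
        rw [show t + T - (u + T) = t - u by ring, hper u]
      rw [h2] at h0
      rw [h0]
      norm_num
    rw [h1, ← intervalIntegral.integral_add_adjacent_intervals (hint t (-T) 0) (hint t 0 t)]
    ring
  have hΓ : 0 < Real.Gamma α := Real.Gamma_pos_of_pos hα0
  obtain ⟨M, hM⟩ : ∃ M, ∀ u ∈ Set.Icc (-T) (0:ℝ), |f u| ≤ M := by
    obtain ⟨M, hM⟩ := (isCompact_Icc (a := -T) (b := (0:ℝ))).exists_bound_of_continuousOn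
      hf.continuousOn
    exact ⟨M, fun u hu => hM u hu⟩
  have hM0 : 0 ≤ M := le_trans (abs_nonneg _) (hM 0 ⟨by linarith, le_refl 0⟩)
  have hbound : ∀ t : ℝ, 1 ≤ t →
      ‖(1 / Real.Gamma α) * ∫ u in (-T)..(0:ℝ), (t - u) ^ (α - 1) * f u‖
        ≤ (1 / Real.Gamma α) * (M * T) * t ^ (α - 1) := by
    intro t ht
    have ht0 : 0 < t := by linarith
    have hnorm : ‖∫ u in (-T)..(0:ℝ), (t - u) ^ (α - 1) * f u‖
        ≤ (t ^ (α - 1) * M) * |(0:ℝ) - (-T)| := by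
      apply intervalIntegral.norm_integral_le_of_norm_le_const
      intro x hx
      rw [Set.uIoc_of_le (by linarith : -T ≤ (0:ℝ))] at hx
      have hx1 : -T < x := hx.1
      have hx2 : x ≤ 0 := hx.2
      have htx : 0 < t - x := by linarith
      have hr1 : (t - x) ^ (α - 1) ≤ t ^ (α - 1) :=
        Real.rpow_le_rpow_of_nonpos ht0 (by linarith) hexp
      have hr0 : 0 ≤ (t - x) ^ (α - 1) := Real.rpow_nonneg (le_of_lt htx) _
      have hfx : |f x| ≤ M := hM x ⟨le_of_lt hx1, hx2⟩
      calc ‖(t - x) ^ (α - 1) * f x‖ = (t - x) ^ (α - 1) * |f x| := by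
            rw [Real.norm_eq_abs, abs_mul, abs_of_nonneg hr0]
        _ ≤ t ^ (α - 1) * M := mul_le_mul hr1 hfx (abs_nonneg _)
            (Real.rpow_nonneg (le_of_lt ht0) _)
    rw [norm_mul]
    have habs : ‖(1 : ℝ) / Real.Gamma α‖ = 1 / Real.Gamma α := by
      rw [Real.norm_eq_abs, abs_of_pos (by positivity)]
    rw [habs]
    calc (1 / Real.Gamma α) * ‖∫ u in (-T)..(0:ℝ), (t - u) ^ (α - 1) * f u‖
        ≤ (1 / Real.Gamma α) * ((t ^ (α - 1) * M) * |(0:ℝ) - (-T)|) := by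
          apply mul_le_mul_of_nonneg_left hnorm (by positivity)
      _ = (1 / Real.Gamma α) * (M * T) * t ^ (α - 1) := by
          rw [show (0:ℝ) - (-T) = T by ring, abs_of_pos hT]; ring
  have hmain : Tendsto (fun t : ℝ =>
      (1 / Real.Gamma α) * ∫ u in (-T)..(0:ℝ), (t - u) ^ (α - 1) * f u) atTop (nhds 0) := by
    have h1 : Tendsto (fun t : ℝ => t ^ (α - 1)) atTop (nhds 0) := by
      have := tendsto_rpow_neg_atTop (y := 1 - α) (by linarith)
      simpa [neg_sub] using this
    have hg : Tendsto (fun t : ℝ => (1 / Real.Gamma α) * (M * T) * t ^ (α - 1))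
        atTop (nhds 0) := by
      have := h1.const_mul ((1 / Real.Gamma α) * (M * T))
      simpa using this
    refine squeeze_zero_norm' ?_ hg
    filter_upwards [eventually_ge_atTop (1:ℝ)] with t ht
    exact hbound t ht
  exact Tendsto.congr (fun t => (heq t).symm) hmain
end

section
/- Let T > 0, let f : ℝ → ℝ be a continuous T-periodic function, and let α ∈ (0,1). If the function t ↦ I^α f(t) is bounded on (0,∞), then I^α f is S-asymptotically T-periodic: it is continuous and bounded on (0,∞) and lim_{t→+∞} [I^α f(t+T) − I^α f(t)] = 0. -/
open MeasureTheory intervalIntegral Filter Set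

/-!
Write `I t = ∫₀ᵗ (t - s)^(α-1) f s ds`. The substitution `s = t u` gives
`I t = t^α ∫₀¹ (1 - u)^(α-1) f (t u) du`, whose singularity no longer moves with `t`, so
continuity on `(0, ∞)` follows by dominated convergence. Periodicity of `f` turns
`I (t + T) - I t` into `∫_{-T}^0 (t - s)^(α-1) f s ds`, an integral over a fixed interval whose
integrand decays like `t^(α-1)` since `α < 1`; dominated convergence again gives the limit `0`.
-/

section RiemannLiouvilleKernel

variable {β : ℝ} {f : ℝ → ℝ}

lemma intervalIntegrable_sub_rpow (hβ : -1 < β) (t a b : ℝ) :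
    IntervalIntegrable (fun s => (t - s) ^ β) volume a b := by
  simpa using (intervalIntegrable_rpow' (a := t - a) (b := t - b) hβ).comp_sub_left t

lemma integral_sub_rpow_mul_eq_rpow_mul_integral_comp_mul {t : ℝ} (ht : 0 < t) :
    ∫ s in (0 : ℝ)..t, (t - s) ^ β * f s
      = t ^ (β + 1) * ∫ u in (0 : ℝ)..1, (1 - u) ^ β * f (t * u) := by
  calc ∫ s in (0 : ℝ)..t, (t - s) ^ β * f s
      = t * ∫ u in (0 : ℝ)..1, (t - t * u) ^ β * f (t * u) := by
        rw [integral_comp_mul_left (fun s => (t - s) ^ β * f s) ht.ne', smul_eq_mul, mul_zero,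
          mul_one, mul_inv_cancel_left₀ ht.ne']
    _ = t * ∫ u in (0 : ℝ)..1, t ^ β * ((1 - u) ^ β * f (t * u)) := by
        congr 1
        refine integral_congr fun u hu => ?_
        rw [uIcc_of_le zero_le_one] at hu
        simp only [show t - t * u = t * (1 - u) by ring,
          Real.mul_rpow ht.le (sub_nonneg.2 hu.2), mul_assoc]
    _ = t ^ (β + 1) * ∫ u in (0 : ℝ)..1, (1 - u) ^ β * f (t * u) := by
        rw [intervalIntegral.integral_const_mul, Real.rpow_add_one ht.ne']
        ring

lemma continuous_integral_one_sub_rpow_mul_comp_mul (hβ : -1 < β) (hf : Continuous f) :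
    Continuous fun t => ∫ u in (0 : ℝ)..1, (1 - u) ^ β * f (t * u) := by
  refine continuous_iff_continuousAt.2 fun t₀ => ?_
  obtain ⟨M, hM⟩ := (isCompact_closedBall (0 : ℝ) (|t₀| + 1)).exists_bound_of_continuousOn
    hf.continuousOn
  refine continuousAt_of_dominated_interval (bound := fun u => (1 - u) ^ β * M)
    (Eventually.of_forall fun t => ?_) ?_
    ((intervalIntegrable_sub_rpow hβ 1 0 1).mul_const M)
    (Eventually.of_forall fun u _ => by fun_prop)
  · exact (by fun_prop : Measurable fun u : ℝ => (1 - u) ^ β * f (t * u)).aestronglyMeasurable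
  · filter_upwards [Metric.ball_mem_nhds t₀ one_pos] with t ht
    refine Eventually.of_forall fun u hu => ?_
    rw [uIoc_of_le zero_le_one] at hu
    have hu1 : 0 ≤ 1 - u := sub_nonneg.2 hu.2
    have htu : t * u ∈ Metric.closedBall (0 : ℝ) (|t₀| + 1) := by
      rw [Metric.mem_ball, Real.dist_eq] at ht
      simp only [Metric.mem_closedBall, dist_zero_right, norm_mul, Real.norm_eq_abs,
        abs_of_pos hu.1]
      calc |t| * u ≤ |t| * 1 := mul_le_mul_of_nonneg_left hu.2 (abs_nonneg t)
        _ ≤ |t₀| + 1 := by linarith [abs_sub_abs_le_abs_sub t t₀]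
    rw [norm_mul, Real.norm_of_nonneg (Real.rpow_nonneg hu1 β)]
    exact mul_le_mul_of_nonneg_left (hM _ htu) (Real.rpow_nonneg hu1 β)

lemma continuousOn_integral_sub_rpow_mul (hβ : -1 < β) (hf : Continuous f) :
    ContinuousOn (fun t => ∫ s in (0 : ℝ)..t, (t - s) ^ β * f s) (Ioi 0) := by
  refine ContinuousOn.congr ?_ fun t ht => integral_sub_rpow_mul_eq_rpow_mul_integral_comp_mul ht
  exact (continuousOn_id.rpow_const fun t ht => Or.inl (ne_of_gt ht)).mul
    (continuous_integral_one_sub_rpow_mul_comp_mul hβ hf).continuousOn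

lemma integral_sub_rpow_mul_add_period_sub (hβ : -1 < β) (hf : Continuous f) {T : ℝ}
    (hper : Function.Periodic f T) (t : ℝ) :
    (∫ s in (0 : ℝ)..t + T, (t + T - s) ^ β * f s) - ∫ s in (0 : ℝ)..t, (t - s) ^ β * f s
      = ∫ s in -T..0, (t - s) ^ β * f s := by
  have hshift : ∫ s in (0 : ℝ)..t + T, (t + T - s) ^ β * f s
      = ∫ s in -T..t, (t - s) ^ β * f s := by
    rw [← neg_add_cancel T, ← integral_comp_add_right]
    exact integral_congr fun s _ => by simp only [hper s, add_sub_add_right_eq_sub]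
  have hint : ∀ a b, IntervalIntegrable (fun s => (t - s) ^ β * f s) volume a b :=
    fun a b => (intervalIntegrable_sub_rpow hβ t a b).mul_continuousOn hf.continuousOn
  rw [hshift, ← integral_add_adjacent_intervals (hint (-T) 0) (hint 0 t), add_sub_cancel_right]

lemma tendsto_integral_sub_rpow_mul_atTop (hβ : β < 0) (hf : Continuous f) (a b : ℝ) :
    Tendsto (fun t => ∫ s in a..b, (t - s) ^ β * f s) atTop (nhds 0) := by
  obtain ⟨M, hM⟩ := (isCompact_uIcc (a := a) (b := b)).exists_bound_of_continuousOn
    hf.continuousOn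
  have hlim : ∀ s, Tendsto (fun t : ℝ => (t - s) ^ β * f s) atTop (nhds 0) := fun s => by
    simpa [sub_eq_add_neg] using ((tendsto_rpow_neg_atTop (neg_pos.2 hβ)).comp
      (tendsto_atTop_add_const_right _ (-s) tendsto_id)).mul_const (f s)
  have hbound : ∀ᶠ t in atTop, ∀ᵐ s, s ∈ uIoc a b → ‖(t - s) ^ β * f s‖ ≤ M := by
    filter_upwards [eventually_ge_atTop (max a b + 1)] with t ht
    refine Eventually.of_forall fun s hs => ?_
    have hs' : s ∈ uIcc a b := uIoc_subset_uIcc hs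
    have hts : 1 ≤ t - s := by linarith [hs'.2]
    rw [norm_mul, Real.norm_of_nonneg (Real.rpow_nonneg (by linarith) β)]
    calc (t - s) ^ β * ‖f s‖
        ≤ 1 * M := mul_le_mul (Real.rpow_le_one_of_one_le_of_nonpos hts hβ.le) (hM s hs')
          (norm_nonneg _) zero_le_one
      _ = M := one_mul M
  simpa using tendsto_integral_filter_of_dominated_convergence (fun _ => M)
    (Eventually.of_forall fun t =>
      (by fun_prop : Measurable fun s => (t - s) ^ β * f s).aestronglyMeasurable)
    hbound intervalIntegrable_const (Eventually.of_forall fun s _ => hlim s)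

end RiemannLiouvilleKernel

theorem rl_integral_s_asymptotically_periodic_general (T : ℝ)
    (f : ℝ → ℝ) (hf : Continuous f) (hper : Function.Periodic f T)
    (α : ℝ) (hα : α ∈ Set.Ioo (0 : ℝ) 1)
    (Iαf : ℝ → ℝ)
    (hIαf : ∀ t : ℝ, Iαf t = (1 / Real.Gamma α) * ∫ s in (0 : ℝ)..t, (t - s) ^ (α - 1) * f s)
    (hbdd : ∃ M : ℝ, ∀ t ∈ Ioi (0 : ℝ), |Iαf t| ≤ M) :
    ContinuousOn Iαf (Ioi 0) ∧ (∃ M : ℝ, ∀ t ∈ Ioi (0 : ℝ), |Iαf t| ≤ M) ∧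
      Tendsto (fun t : ℝ => Iαf (t + T) - Iαf t) atTop (nhds 0) := by
  obtain ⟨hα0, hα1⟩ := hα
  refine ⟨(continuousOn_const.mul (continuousOn_integral_sub_rpow_mul (by linarith) hf)).congr
    fun t _ => hIαf t, hbdd, ?_⟩
  simp only [hIαf, ← mul_sub,
    integral_sub_rpow_mul_add_period_sub (β := α - 1) (by linarith) hf hper]
  simpa using (tendsto_integral_sub_rpow_mul_atTop (by linarith) hf (-T) 0).const_mul
    (1 / Real.Gamma α)

/-- If `f` is continuous `T`-periodic, `α ∈ (0,1)` and `I^α f` is bounded on `(0,∞)`,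
then `I^α f` is S-asymptotically `T`-periodic: continuous and bounded on `(0,∞)` with
`I^α f (t+T) - I^α f (t) → 0` as `t → +∞`. -/
theorem rl_integral_s_asymptotically_periodic (T : ℝ) (hT : 0 < T)
    (f : ℝ → ℝ) (hf : Continuous f) (hper : Function.Periodic f T)
    (α : ℝ) (hα : α ∈ Set.Ioo (0 : ℝ) 1)
    (Iαf : ℝ → ℝ)
    (hIαf : ∀ t : ℝ, Iαf t = (1 / Real.Gamma α) * ∫ s in (0 : ℝ)..t, (t - s) ^ (α - 1) * f s)
    (hbdd : ∃ M : ℝ, ∀ t ∈ Ioi (0 : ℝ), |Iαf t| ≤ M) :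
    ContinuousOn Iαf (Ioi 0) ∧ (∃ M : ℝ, ∀ t ∈ Ioi (0 : ℝ), |Iαf t| ≤ M) ∧
      Tendsto (fun t : ℝ => Iαf (t + T) - Iαf t) atTop (nhds 0) :=
  rl_integral_s_asymptotically_periodic_general T f hf hper α hα Iαf hIαf hbdd
end

section
/- Let T > 0, let f : ℝ → ℝ be a continuously differentiable T-periodic function, and let α ∈ (0,1). Define the Riemann–Liouville fractional derivative of f by ᴿᴸD^α f(t) = ᶜD^α f(t) + f(0) t^{−α}/Γ(1−α) for t > 0, where ᶜD^α f(t) = (1/Γ(1−α)) ∫₀ᵗ (t−s)^{−α} f′(s) ds. If ᴿᴸD^α f is bounded on (0,∞), then ᴿᴸD^α f is S-asymptotically T-periodic: it is continuous and bounded on (0,∞) and lim_{t→+∞} [ᴿᴸD^α f(t+T) − ᴿᴸD^α f(t)] = 0. -/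
open MeasureTheory intervalIntegral Filter Set

/-- If `f` is a continuously differentiable `T`-periodic function, `α ∈ (0,1)`, and the
Riemann–Liouville fractional derivative `ᴿᴸD^α f = ᶜD^α f + f(0) t^{-α}/Γ(1-α)` is bounded
on `(0,∞)`, then it is S-asymptotically `T`-periodic: continuous and bounded on `(0,∞)`
with `ᴿᴸD^α f (t+T) - ᴿᴸD^α f (t) → 0` as `t → +∞`. -/
theorem rl_derivative_s_asymptotically_periodic (T : ℝ) (hT : 0 < T)
    (f : ℝ → ℝ) (hf : ContDiff ℝ 1 f) (hper : Function.Periodic f T)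
    (α : ℝ) (hα : α ∈ Set.Ioo (0 : ℝ) 1)
    (rlD : ℝ → ℝ)
    (hrlD : ∀ t : ℝ, rlD t =
      ((1 / Real.Gamma (1 - α)) * ∫ s in (0 : ℝ)..t, (t - s) ^ (-α) * deriv f s) +
        f 0 * t ^ (-α) / Real.Gamma (1 - α))
    (hbdd : ∃ M : ℝ, ∀ t ∈ Ioi (0 : ℝ), |rlD t| ≤ M) :
    ContinuousOn rlD (Ioi 0) ∧ (∃ M : ℝ, ∀ t ∈ Ioi (0 : ℝ), |rlD t| ≤ M) ∧
      Tendsto (fun t : ℝ => rlD (t + T) - rlD t) atTop (nhds 0) := by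
  obtain ⟨hα0, hα1⟩ := hα
  have hα1' : (-1 : ℝ) < -α := by linarith
  have hΓ : 0 < Real.Gamma (1 - α) := Real.Gamma_pos_of_pos (by linarith)
  have hf' : Continuous (deriv f) := hf.continuous_deriv le_rfl
  -- deriv f is periodic
  have hperd : Function.Periodic (deriv f) T := by
    intro x
    have heq : (fun y => f (y + T)) = f := funext fun y => hper y
    calc deriv f (x + T) = deriv (fun y => f (y + T)) x := by
          rw [deriv_comp_add_const]
      _ = deriv f x := by rw [heq]
  -- global bound on deriv f
  obtain ⟨C, hC⟩ : ∃ C : ℝ, ∀ x, |deriv f x| ≤ C := by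
    have hb := hperd.isBounded_of_continuous hT.ne' hf'
    obtain ⟨C, hC⟩ := isBounded_iff_forall_norm_le.mp hb
    exact ⟨C, fun x => hC _ (Set.mem_range_self x)⟩
  have hC0 : 0 ≤ C := le_trans (abs_nonneg _) (hC 0)
  -- integrability of the integrand on any interval
  have hpow_int : ∀ t a b : ℝ, IntervalIntegrable (fun s => (t - s) ^ (-α)) volume a b := by
    intro t a b
    have := (intervalIntegrable_rpow' (a := t - a) (b := t - b) hα1').comp_sub_left t
    simpa using this
  have hint : ∀ t a b : ℝ,
      IntervalIntegrable (fun s => (t - s) ^ (-α) * deriv f s) volume a b := fun t a b =>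
    (hpow_int t a b).mul_continuousOn hf'.continuousOn
  -- substitution s = σ t and continuity
  set g : ℝ → ℝ := fun t => ∫ σ in (0:ℝ)..1, (1 - σ) ^ (-α) * deriv f (σ * t) with hg
  have hgcont : Continuous g := by
    apply intervalIntegral.continuous_of_dominated_interval
      (bound := fun σ => (1 - σ) ^ (-α) * C)
    · intro x
      exact (((measurable_const.sub measurable_id).pow_const _).mul
        (hf'.measurable.comp (measurable_id.mul_const x))).aestronglyMeasurable
    · intro x
      filter_upwards [] with σ
      intro hσ
      rw [Set.uIoc_of_le (by norm_num : (0:ℝ) ≤ 1)] at hσ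
      have h1σ : 0 ≤ 1 - σ := by linarith [hσ.2]
      rw [Real.norm_eq_abs, abs_mul, abs_of_nonneg (Real.rpow_nonneg h1σ _)]
      exact mul_le_mul_of_nonneg_left (hC _) (Real.rpow_nonneg h1σ _)
    · exact (hpow_int 1 0 1).mul_const C
    · filter_upwards [] with σ
      intro _
      exact continuous_const.mul (hf'.comp (continuous_const.mul continuous_id))
  have key : ∀ t : ℝ, 0 < t → (∫ s in (0:ℝ)..t, (t - s) ^ (-α) * deriv f s)
      = t * (t ^ (-α) * g t) := by
    intro t ht
    have h2 : (∫ σ in (0:ℝ)..1, (t - σ * t) ^ (-α) * deriv f (σ * t))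
        = t⁻¹ • ∫ s in (0:ℝ)*t..1*t, (t - s) ^ (-α) * deriv f s :=
      integral_comp_mul_right (fun s => (t - s) ^ (-α) * deriv f s) ht.ne'
    simp only [zero_mul, one_mul] at h2
    have h3 : (∫ σ in (0:ℝ)..1, (t - σ * t) ^ (-α) * deriv f (σ * t))
        = t ^ (-α) * g t := by
      rw [hg]
      rw [← intervalIntegral.integral_const_mul]
      apply intervalIntegral.integral_congr
      intro σ hσ
      rw [Set.uIcc_of_le (by norm_num : (0:ℝ) ≤ 1)] at hσ
      have h1σ : 0 ≤ 1 - σ := by linarith [hσ.2]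
      have hts : t - σ * t = t * (1 - σ) := by ring
      show (t - σ * t) ^ (-α) * deriv f (σ * t) = t ^ (-α) * ((1 - σ) ^ (-α) * deriv f (σ * t))
      rw [hts, Real.mul_rpow ht.le h1σ]
      ring
    rw [h3] at h2
    rw [h2, smul_eq_mul, ← mul_assoc, mul_inv_cancel₀ ht.ne', one_mul]
  -- continuity
  have hpowc : ContinuousOn (fun t : ℝ => t ^ (-α)) (Ioi 0) :=
    continuousOn_id.rpow_const fun x hx => Or.inl (ne_of_gt hx)
  have hcont : ContinuousOn rlD (Ioi 0) := by
    apply ContinuousOn.congr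
      (f := fun t : ℝ => (1 / Real.Gamma (1 - α)) * (t * (t ^ (-α) * g t)) +
        f 0 * t ^ (-α) / Real.Gamma (1 - α))
      (((continuousOn_const.mul (continuousOn_id.mul
          (hpowc.mul hgcont.continuousOn))).add
        ((continuousOn_const.mul hpowc).div_const _)))
    intro t ht
    rw [hrlD t, key t ht]
  -- difference formula
  have hdiff : ∀ t : ℝ, 0 < t → rlD (t + T) - rlD t
      = (1 / Real.Gamma (1 - α)) * (∫ s in (-T)..(0:ℝ), (t - s) ^ (-α) * deriv f s)
        + (f 0 * (t + T) ^ (-α) / Real.Gamma (1 - α)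
            - f 0 * t ^ (-α) / Real.Gamma (1 - α)) := by
    intro t _
    have hshift : (∫ s in (0:ℝ)..(t + T), (t + T - s) ^ (-α) * deriv f s)
        = ∫ s in (-T)..t, (t - s) ^ (-α) * deriv f s := by
      have h4 := intervalIntegral.integral_comp_add_right (a := -T) (b := t)
        (fun s => (t + T - s) ^ (-α) * deriv f s) T
      rw [neg_add_cancel] at h4
      rw [← h4]
      apply intervalIntegral.integral_congr
      intro s _
      have h5 : t + T - (s + T) = t - s := by ring
      simp only [h5, hperd s]
    have hsplit : (∫ s in (-T)..t, (t - s) ^ (-α) * deriv f s)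
        = (∫ s in (-T)..(0:ℝ), (t - s) ^ (-α) * deriv f s)
          + ∫ s in (0:ℝ)..t, (t - s) ^ (-α) * deriv f s :=
      (intervalIntegral.integral_add_adjacent_intervals (hint t _ _) (hint t _ _)).symm
    rw [hrlD (t + T), hrlD t, hshift, hsplit]
    ring
  -- bound on the tail integral
  have habs : ∀ t : ℝ, 0 < t →
      |∫ s in (-T)..(0:ℝ), (t - s) ^ (-α) * deriv f s| ≤ t ^ (-α) * C * T := by
    intro t ht
    have hb := intervalIntegral.norm_integral_le_of_norm_le_const (C := t ^ (-α) * C)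
      (f := fun s => (t - s) ^ (-α) * deriv f s) (a := -T) (b := 0) ?_
    · rw [Real.norm_eq_abs] at hb
      have habsT : |(0:ℝ) - -T| = T := by
        simp [abs_of_pos hT]
      rw [habsT] at hb
      exact hb
    · intro s hs
      rw [Set.uIoc_of_le (by linarith : -T ≤ (0:ℝ))] at hs
      have hts : t ≤ t - s := by linarith [hs.2]
      have h1 : (t - s) ^ (-α) ≤ t ^ (-α) :=
        Real.rpow_le_rpow_of_nonpos ht hts (by linarith)
      rw [Real.norm_eq_abs, abs_mul, abs_of_nonneg (Real.rpow_nonneg (by linarith) _)]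
      exact mul_le_mul h1 (hC s) (abs_nonneg _) (Real.rpow_nonneg ht.le _)
  -- limits
  have hpow0 : Tendsto (fun t : ℝ => t ^ (-α)) atTop (nhds 0) := tendsto_rpow_neg_atTop hα0
  have hpowT : Tendsto (fun t : ℝ => (t + T) ^ (-α)) atTop (nhds 0) :=
    hpow0.comp (tendsto_atTop_add_const_right _ T tendsto_id)
  have h1 : Tendsto (fun t : ℝ => (1 / Real.Gamma (1 - α)) *
      ∫ s in (-T)..(0:ℝ), (t - s) ^ (-α) * deriv f s) atTop (nhds 0) := by
    apply squeeze_zero_norm' (a := fun t : ℝ =>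
      |1 / Real.Gamma (1 - α)| * (t ^ (-α) * C * T))
    · filter_upwards [eventually_gt_atTop 0] with t ht
      rw [Real.norm_eq_abs, abs_mul]
      exact mul_le_mul_of_nonneg_left (habs t ht) (abs_nonneg _)
    · have := tendsto_const_nhds (x := |1 / Real.Gamma (1 - α)|) (f := atTop (α := ℝ)) |>.mul
        ((hpow0.mul (tendsto_const_nhds (x := C))).mul (tendsto_const_nhds (x := T)))
      simpa using this
  have h2 : Tendsto (fun t : ℝ => f 0 * (t + T) ^ (-α) / Real.Gamma (1 - α)
      - f 0 * t ^ (-α) / Real.Gamma (1 - α)) atTop (nhds 0) := by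
    have := ((tendsto_const_nhds (x := f 0) (f := atTop (α := ℝ)) |>.mul hpowT).div_const
      (Real.Gamma (1 - α))).sub
      ((tendsto_const_nhds (x := f 0) (f := atTop (α := ℝ)) |>.mul hpow0).div_const
      (Real.Gamma (1 - α)))
    simpa using this
  refine ⟨hcont, hbdd, ?_⟩
  have h12 := h1.add h2
  rw [add_zero] at h12
  apply Tendsto.congr' ?_ h12
  filter_upwards [eventually_gt_atTop 0] with t ht
  exact (hdiff t ht).symm
end

section
/- Let T > 0, let f : ℝ → ℝ be a continuous T-periodic function with ∫₀ᵀ f(t) dt = 0, and let α ∈ (0,1). Then for every t ≥ 0 the limit Φ(t) = lim_{n→∞} (1/Γ(α)) ∫_{t−nT}^{t} (t−s)^{α−1} f(s) ds exists (the limit taken over natural numbers n), the resulting function Φ is continuous on [0,∞), and Φ is T-periodic: Φ(t+T) = Φ(t) for all t ≥ 0. -/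
open MeasureTheory intervalIntegral Filter Set

/-!
After the substitution `u = t - s`, the Weyl integral over `n` periods is the sum of the pieces
`∫_{kT}^{(k+1)T} u^{α-1} f(t-u) du`, `k < n`. Because `f` has mean zero, the primitive of
`u ↦ f(t-u)` taken from `kT` vanishes at both ends of that period, so integrating by parts against
`u^{α-1}` bounds the `k`-th piece by `O(k^{α-2})`, uniformly in `t`. As `α - 2 < -1`, the series
converges uniformly, hence to a continuous function, and it is `T`-periodic since every piece is.
-/

theorem Function.Periodic.intervalIntegral_comp_sub_left_eq {E : Type*} [NormedAddCommGroup E]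
    [NormedSpace ℝ E] {f : ℝ → E} {T : ℝ} (hf : Function.Periodic f T) (t a : ℝ) :
    ∫ v in a..a + T, f (t - v) = ∫ x in (0 : ℝ)..T, f x := by
  rw [integral_comp_sub_left, ← zero_add T, ← hf.intervalIntegral_add_eq (t - (a + T)) 0]
  ring_nf

theorem norm_integral_rpow_mul_le {g : ℝ → ℝ} {M p b : ℝ} (hM : ∀ x, ‖g x‖ ≤ M) (hp : -1 < p)
    (hb : 0 ≤ b) :
    ‖∫ x in (0 : ℝ)..b, x ^ p * g x‖ ≤ M * (b ^ (p + 1) / (p + 1)) := by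
  have hle : ∀ x ∈ Ioc (0 : ℝ) b, ‖x ^ p * g x‖ ≤ x ^ p * M := fun x hx => by
    rw [norm_mul, Real.norm_of_nonneg (Real.rpow_nonneg hx.1.le p)]
    exact mul_le_mul_of_nonneg_left (hM x) (Real.rpow_nonneg hx.1.le p)
  calc ‖∫ x in (0 : ℝ)..b, x ^ p * g x‖ ≤ ∫ x in (0 : ℝ)..b, x ^ p * M :=
        norm_integral_le_of_norm_le hb (ae_of_all _ hle) ((intervalIntegrable_rpow' hp).mul_const M)
    _ = M * (b ^ (p + 1) / (p + 1)) := by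
        rw [intervalIntegral.integral_mul_const, integral_rpow (Or.inl hp),
          Real.zero_rpow (by linarith)]
        ring

theorem norm_integral_rpow_mul_le_of_integral_eq_zero {g : ℝ → ℝ} (hg : Continuous g) {M p a b : ℝ}
    (hM : ∀ x, ‖g x‖ ≤ M) (hp : p ≤ 1) (ha : 0 < a) (hab : a ≤ b)
    (hg₀ : ∫ x in a..b, g x = 0) :
    ‖∫ x in a..b, x ^ p * g x‖ ≤ |p| * a ^ (p - 1) * M * (b - a) ^ 2 := by
  set G : ℝ → ℝ := fun x => ∫ y in a..x, g y
  have hpos : ∀ x ∈ uIcc a b, 0 < x := fun x hx => ha.trans_le (uIcc_of_le hab ▸ hx).1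
  have hparts := integral_mul_deriv_eq_deriv_mul (v := G)
    (fun x hx => Real.hasDerivAt_rpow_const (p := p) (Or.inl (hpos x hx).ne'))
    (fun x _ => (hg.integral_hasStrictDerivAt a x).hasDerivAt)
    (continuousOn_const.mul
      (continuousOn_id.rpow_const fun x hx => Or.inl (hpos x hx).ne')).intervalIntegrable
    (hg.intervalIntegrable a b)
  have hG : ∀ x ∈ uIoc a b, ‖p * x ^ (p - 1) * G x‖ ≤ |p| * a ^ (p - 1) * M * (b - a) := by
    intro x hx
    rw [uIoc_of_le hab] at hx
    have hGx : ‖G x‖ ≤ M * (b - a) := by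
      refine (norm_integral_le_of_norm_le_const fun y _ => hM y).trans ?_
      rw [abs_of_nonneg (by linarith [hx.1])]
      exact mul_le_mul_of_nonneg_left (by linarith [hx.2]) ((norm_nonneg _).trans (hM 0))
    have hxa : x ^ (p - 1) ≤ a ^ (p - 1) := Real.rpow_le_rpow_of_nonpos ha hx.1.le (by linarith)
    rw [norm_mul, norm_mul, Real.norm_eq_abs,
      Real.norm_of_nonneg (Real.rpow_nonneg (ha.trans hx.1).le _), mul_assoc _ M]
    gcongr
  calc ‖∫ x in a..b, x ^ p * g x‖ = ‖∫ x in a..b, p * x ^ (p - 1) * G x‖ := by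
        rw [hparts]
        simp [G, hg₀]
    _ ≤ |p| * a ^ (p - 1) * M * (b - a) * |b - a| := norm_integral_le_of_norm_le_const hG
    _ = |p| * a ^ (p - 1) * M * (b - a) ^ 2 := by
        rw [abs_of_nonneg (sub_nonneg.2 hab)]
        ring

theorem continuous_intervalIntegral_mul_comp_sub {w f : ℝ → ℝ} {a b M : ℝ}
    (hw : IntervalIntegrable w volume a b) (hf : Continuous f) (hM : ∀ x, ‖f x‖ ≤ M) :
    Continuous fun t => ∫ u in a..b, w u * f (t - u) := by
  refine continuous_of_dominated_interval (bound := fun u => ‖w u‖ * M) (fun t => ?_)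
    (fun t => ae_of_all _ fun u _ => ?_) (hw.norm.mul_const M)
    (ae_of_all _ fun u _ => continuous_const.mul (hf.comp (continuous_id.sub continuous_const)))
  · exact (hw.mul_continuousOn (hf.comp (continuous_const.sub continuous_id)).continuousOn
      ).def'.aestronglyMeasurable
  · rw [norm_mul]
    exact mul_le_mul_of_nonneg_left (hM _) (norm_nonneg _)

/-- The part of the Weyl integral coming from `s ∈ [t - (k+1)T, t - kT]`, written in `u = t - s`. -/
noncomputable def weylPiece (α T : ℝ) (f : ℝ → ℝ) (k : ℕ) (t : ℝ) : ℝ :=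
  ∫ u in k * T..(k + 1) * T, u ^ (α - 1) * f (t - u)

section weylPiece

variable {α T : ℝ} {f : ℝ → ℝ}

theorem sum_weylPiece_eq_integral (hα : 0 < α) (hf : Continuous f) (t : ℝ) (n : ℕ) :
    ∑ k ∈ Finset.range n, weylPiece α T f k t =
      ∫ s in (t - n * T)..t, (t - s) ^ (α - 1) * f s := by
  have hint : ∀ a b : ℝ, IntervalIntegrable (fun u => u ^ (α - 1) * f (t - u)) volume a b :=
    fun a b => (intervalIntegrable_rpow' (by linarith)).mul_continuousOn
      (hf.comp (continuous_const.sub continuous_id)).continuousOn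
  have hsum := sum_integral_adjacent_intervals (a := fun k : ℕ => (k : ℝ) * T) (n := n)
    fun k _ => hint _ _
  simp only [Nat.cast_zero, zero_mul, Nat.cast_add, Nat.cast_one] at hsum
  simp only [weylPiece]
  rw [hsum]
  simpa only [sub_sub_cancel, sub_zero] using
    integral_comp_sub_left (fun s => (t - s) ^ (α - 1) * f s) t (a := 0) (b := n * T)

theorem weylPiece_periodic (hper : Function.Periodic f T) (k : ℕ) :
    Function.Periodic (weylPiece α T f k) T := fun t =>
  integral_congr fun u _ => by simp only [add_sub_right_comm t T u, hper (t - u)]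

theorem continuous_weylPiece (hα : 0 < α) (hf : Continuous f) {M : ℝ} (hM : ∀ x, ‖f x‖ ≤ M)
    (k : ℕ) : Continuous (weylPiece α T f k) :=
  continuous_intervalIntegral_mul_comp_sub (intervalIntegrable_rpow' (by linarith)) hf hM

theorem norm_weylPiece_zero_le (hα : 0 < α) (hT : 0 ≤ T) {M : ℝ} (hM : ∀ x, ‖f x‖ ≤ M)
    (t : ℝ) : ‖weylPiece α T f 0 t‖ ≤ M * (T ^ α / α) := by
  have h := norm_integral_rpow_mul_le (g := fun u => f (t - u)) (fun u => hM _)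
    (show -1 < α - 1 by linarith) hT
  simpa [weylPiece] using h

theorem norm_weylPiece_le (hα : α ≤ 2) (hT : 0 < T) (hf : Continuous f)
    (hper : Function.Periodic f T) (hmean : ∫ t in (0 : ℝ)..T, f t = 0) {M : ℝ}
    (hM : ∀ x, ‖f x‖ ≤ M) {k : ℕ} (hk : 0 < k) (t : ℝ) :
    ‖weylPiece α T f k t‖ ≤ |α - 1| * M * T ^ 2 * (k * T) ^ (α - 2) := by
  have hkT : (0 : ℝ) < k * T := by positivity
  have hmean' : ∫ u in k * T..(k + 1) * T, f (t - u) = 0 := by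
    rw [add_one_mul, hper.intervalIntegral_comp_sub_left_eq, hmean]
  have h := norm_integral_rpow_mul_le_of_integral_eq_zero
    (hf.comp (continuous_const.sub continuous_id)) (fun u => hM (t - u))
    (show α - 1 ≤ 1 by linarith) hkT (by nlinarith) hmean'
  rw [show α - 1 - 1 = α - 2 by ring, show ((k : ℝ) + 1) * T - k * T = T by ring] at h
  exact h.trans_eq (by ring)

theorem exists_summable_bound_weylPiece (hα : α ∈ Ioo (0 : ℝ) 1) (hT : 0 < T) (hf : Continuous f)
    (hper : Function.Periodic f T) (hmean : ∫ t in (0 : ℝ)..T, f t = 0) {M : ℝ}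
    (hM : ∀ x, ‖f x‖ ≤ M) :
    ∃ C : ℕ → ℝ, Summable C ∧ ∀ k t, ‖weylPiece α T f k t‖ ≤ C k := by
  refine ⟨Function.update (fun k : ℕ => |α - 1| * M * T ^ 2 * (k * T) ^ (α - 2)) 0
    (M * (T ^ α / α)), ?_, fun k t => ?_⟩
  · refine (Summable.mul_left (|α - 1| * M * T ^ 2) ?_).update 0 _
    simp_rw [fun k : ℕ => Real.mul_rpow k.cast_nonneg hT.le (z := α - 2)]
    exact (Real.summable_nat_rpow.2 (by linarith [hα.2])).mul_right _
  · rcases Nat.eq_zero_or_pos k with rfl | hk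
    · simpa using norm_weylPiece_zero_le hα.1 hT.le hM t
    · rw [Function.update_of_ne hk.ne']
      exact norm_weylPiece_le (by linarith [hα.2]) hT hf hper hmean hM hk t

end weylPiece

/-- For a continuous `T`-periodic `f` with zero mean over a period and `α ∈ (0,1)`, the
Weyl fractional integral `Φ(t) = lim_n (1/Γ(α)) ∫_{t-nT}^{t} (t-s)^{α-1} f(s) ds`
exists for each `t ≥ 0`, is continuous on `[0,∞)`, and is `T`-periodic there. -/
theorem weyl_integral_exists_continuous_periodic (T : ℝ) (hT : 0 < T)
    (f : ℝ → ℝ) (hf : Continuous f) (hper : Function.Periodic f T)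
    (hmean : (∫ t in (0 : ℝ)..T, f t) = 0)
    (α : ℝ) (hα : α ∈ Set.Ioo (0 : ℝ) 1) :
    ∃ Φ : ℝ → ℝ,
      (∀ t ∈ Ici (0 : ℝ),
        Tendsto (fun n : ℕ =>
            (1 / Real.Gamma α) * ∫ s in (t - (n : ℝ) * T)..t, (t - s) ^ (α - 1) * f s)
          atTop (nhds (Φ t))) ∧
      ContinuousOn Φ (Ici 0) ∧
      ∀ t ∈ Ici (0 : ℝ), Φ (t + T) = Φ t := by
  obtain ⟨M, hM⟩ := isBounded_iff_forall_norm_le.1 (hper.isBounded_of_continuous hT.ne' hf)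
  rw [forall_mem_range] at hM
  obtain ⟨C, hC, hbound⟩ := exists_summable_bound_weylPiece hα hT hf hper hmean hM
  refine ⟨fun t => (1 / Real.Gamma α) * ∑' k, weylPiece α T f k t, fun t _ => ?_, ?_,
    fun t _ => ?_⟩
  · simp_rw [← sum_weylPiece_eq_integral hα.1 hf]
    exact ((hC.of_norm_bounded (hbound · t)).hasSum.tendsto_sum_nat).const_mul _
  · exact (continuous_const.mul
      (continuous_tsum (continuous_weylPiece hα.1 hf hM) hC hbound)).continuousOn
  · simp only [weylPiece_periodic hper _ t]
end

section
/- Let T > 0, let f : ℝ → ℝ be a continuous T-periodic function, and let α ∈ (0,1). If the function t ↦ I^α f(t) is bounded on (0,∞), then I^α f is asymptotically T-periodic: there exists a continuous T-periodic function Φ : ℝ → ℝ such that lim_{t→+∞} [I^α f(t) − Φ(t)] = 0. -/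
/-!
Write `f = c + g`, where `c` is the mean of `f`, and let `F` be the primitive of `g` vanishing at
`0`; it is periodic, bounded and Lipschitz. Integrating by parts against the kernel `u ^ (α - 1)`,
  `∫₀ᵗ (t - s) ^ (α - 1) f s ds = c t ^ α / α + t ^ (α - 1) (F t - F 0)`
  `    + (α - 1) ∫₀ᵗ u ^ (α - 2) (F (t - u) - F t) du`,
and since `F (t - u) - F t` is `O(u)` near `0` and bounded, the last integral differs from the
continuous periodic function `Ψ t = ∫₀^∞ u ^ (α - 2) (F (t - u) - F t) du` by `O(t ^ (α - 1))`.
So `Γ(α) I^α f = c t ^ α / α + (α - 1) Ψ + o(1)`, and boundedness of `I^α f` forces `c = 0`.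
-/

open MeasureTheory intervalIntegral Filter Set Topology
open scoped NNReal

theorem Function.Periodic.exists_abs_le_of_continuous {f : ℝ → ℝ} {T : ℝ}
    (hper : Function.Periodic f T) (hT : T ≠ 0) (hf : Continuous f) : ∃ C, ∀ x, |f x| ≤ C := by
  obtain ⟨C, hC⟩ := isBounded_iff_forall_norm_le.1 (hper.isBounded_of_continuous hT hf)
  exact ⟨C, fun x => hC _ (mem_range_self x)⟩

theorem Function.Periodic.periodic_primitive {E : Type*} [NormedAddCommGroup E] [NormedSpace ℝ E]
    {g : ℝ → E} {T : ℝ} (hper : Function.Periodic g T)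
    (hg : ∀ a b, IntervalIntegrable g volume a b) (hzero : ∫ x in 0..T, g x = 0) :
    Function.Periodic (fun x => ∫ u in 0..x, g u) T := fun x => by
  simp only [hper.intervalIntegral_add_eq_add 0 x hg, zero_add, hzero, add_zero]

section SingularKernel

variable {α B : ℝ} {L : ℝ≥0} {F : ℝ → ℝ}

theorem abs_rpow_mul_sub_le_of_lipschitzWith (hF : LipschitzWith L F) (t : ℝ) {u : ℝ}
    (hu : 0 < u) : |u ^ (α - 2) * (F (t - u) - F t)| ≤ L * u ^ (α - 1) := by
  have hLip : |F (t - u) - F t| ≤ L * u := by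
    simpa [abs_of_pos hu] using hF.norm_sub_le (t - u) t
  rw [abs_mul, abs_of_nonneg (Real.rpow_nonneg hu.le _)]
  calc u ^ (α - 2) * |F (t - u) - F t| ≤ u ^ (α - 2) * (L * u) := by gcongr
    _ = L * u ^ (α - 1) := by
      rw [show α - 1 = α - 2 + 1 by ring, Real.rpow_add_one hu.ne']; ring

theorem abs_rpow_mul_sub_le_of_abs_le (hB : ∀ x, |F x| ≤ B) (t : ℝ) {u : ℝ} (hu : 0 < u) :
    |u ^ (α - 2) * (F (t - u) - F t)| ≤ 2 * B * u ^ (α - 2) := by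
  rw [abs_mul, abs_of_nonneg (Real.rpow_nonneg hu.le _), mul_comm]
  gcongr
  linarith [abs_sub (F (t - u)) (F t), hB (t - u), hB t]

theorem integrableOn_Ioi_min_rpow (hα0 : 0 < α) (hα1 : α < 1) {a b : ℝ} (ha : 0 ≤ a)
    (hb : 0 ≤ b) : IntegrableOn (fun u => min (a * u ^ (α - 1)) (b * u ^ (α - 2))) (Ioi 0) := by
  have hmeas : ∀ s ⊆ Ioi (0 : ℝ), MeasurableSet s →
      AEStronglyMeasurable (fun u => min (a * u ^ (α - 1)) (b * u ^ (α - 2))) (volume.restrict s) :=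
    fun s hs hsm => ContinuousOn.aestronglyMeasurable (by
      refine ContinuousOn.inf (continuousOn_const.mul ?_) (continuousOn_const.mul ?_) <;>
      exact continuousOn_id.rpow_const fun x hx => Or.inl (hs hx).ne') hsm
  have hnorm : ∀ u : ℝ, 0 < u →
      ‖min (a * u ^ (α - 1)) (b * u ^ (α - 2))‖ = min (a * u ^ (α - 1)) (b * u ^ (α - 2)) :=
    fun u hu => Real.norm_of_nonneg (by positivity)
  rw [← Ioc_union_Ioi_eq_Ioi zero_le_one, integrableOn_union]
  constructor
  · have := (intervalIntegrable_rpow' (r := α - 1) (by linarith) (a := 0) (b := 1)).const_mul a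
    rw [intervalIntegrable_iff_integrableOn_Ioc_of_le zero_le_one] at this
    refine this.mono' (hmeas _ Ioc_subset_Ioi_self measurableSet_Ioc) ?_
    filter_upwards [ae_restrict_mem measurableSet_Ioc] with u hu
    exact (hnorm u hu.1).trans_le (min_le_left _ _)
  · refine ((integrableOn_Ioi_rpow_of_lt (by linarith : α - 2 < -1) one_pos).const_mul b).mono'
      (hmeas _ (Ioi_subset_Ioi zero_le_one) measurableSet_Ioi) ?_
    filter_upwards [ae_restrict_mem measurableSet_Ioi] with u hu
    exact (hnorm u (zero_lt_one.trans hu)).trans_le (min_le_right _ _)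

theorem aestronglyMeasurable_rpow_mul_sub (hF : Continuous F) (t : ℝ) {s : Set ℝ}
    (hs : s ⊆ Ioi 0) (hsm : MeasurableSet s) :
    AEStronglyMeasurable (fun u => u ^ (α - 2) * (F (t - u) - F t)) (volume.restrict s) :=
  ContinuousOn.aestronglyMeasurable ((continuousOn_id.rpow_const fun x hx => Or.inl (hs hx).ne').mul
    (by fun_prop)) hsm

theorem norm_rpow_mul_sub_le_min (hF : LipschitzWith L F) (hB : ∀ x, |F x| ≤ B) (t : ℝ) {u : ℝ}
    (hu : 0 < u) :
    ‖u ^ (α - 2) * (F (t - u) - F t)‖ ≤ min (L * u ^ (α - 1)) (2 * B * u ^ (α - 2)) :=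
  le_min (abs_rpow_mul_sub_le_of_lipschitzWith hF t hu) (abs_rpow_mul_sub_le_of_abs_le hB t hu)

theorem integrableOn_Ioi_rpow_mul_sub (hα0 : 0 < α) (hα1 : α < 1) (hF : LipschitzWith L F)
    (hB : ∀ x, |F x| ≤ B) (t : ℝ) :
    IntegrableOn (fun u => u ^ (α - 2) * (F (t - u) - F t)) (Ioi 0) := by
  have hB0 : 0 ≤ B := (abs_nonneg _).trans (hB 0)
  refine (integrableOn_Ioi_min_rpow hα0 hα1 L.2 (by positivity : 0 ≤ 2 * B)).mono'
    (aestronglyMeasurable_rpow_mul_sub hF.continuous t subset_rfl measurableSet_Ioi) ?_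
  filter_upwards [ae_restrict_mem measurableSet_Ioi] with u hu
  exact norm_rpow_mul_sub_le_min hF hB t hu

theorem continuous_integral_Ioi_rpow_mul_sub (hα0 : 0 < α) (hα1 : α < 1) (hF : LipschitzWith L F)
    (hB : ∀ x, |F x| ≤ B) :
    Continuous fun t => ∫ u in Ioi 0, u ^ (α - 2) * (F (t - u) - F t) := by
  have hB0 : 0 ≤ B := (abs_nonneg _).trans (hB 0)
  refine continuous_of_dominated
    (fun t => aestronglyMeasurable_rpow_mul_sub hF.continuous t subset_rfl measurableSet_Ioi)
    (fun t => ?_) (integrableOn_Ioi_min_rpow hα0 hα1 L.2 (by positivity : 0 ≤ 2 * B))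
    (ae_of_all _ fun u => by have := hF.continuous; fun_prop)
  filter_upwards [ae_restrict_mem measurableSet_Ioi] with u hu
  exact norm_rpow_mul_sub_le_min hF hB t hu

theorem abs_integral_Ioi_rpow_mul_sub_le (hα1 : α < 1) (hB : ∀ x, |F x| ≤ B) {t : ℝ}
    (ht : 0 < t) :
    |∫ u in Ioi t, u ^ (α - 2) * (F (t - u) - F t)| ≤ 2 * B / (1 - α) * t ^ (α - 1) := by
  have hbound : ∀ᵐ u ∂volume.restrict (Ioi t),
      ‖u ^ (α - 2) * (F (t - u) - F t)‖ ≤ 2 * B * u ^ (α - 2) := by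
    filter_upwards [ae_restrict_mem measurableSet_Ioi] with u hu
    exact abs_rpow_mul_sub_le_of_abs_le hB t (ht.trans hu)
  have hint : ∫ u in Ioi t, 2 * B * u ^ (α - 2) = 2 * B / (1 - α) * t ^ (α - 1) := by
    rw [MeasureTheory.integral_const_mul, integral_Ioi_rpow_of_lt (by linarith) ht,
      show α - 2 + 1 = α - 1 by ring]
    field_simp [show 1 - α ≠ 0 by linarith, show α - 1 ≠ 0 by linarith]
    ring
  exact hint ▸ norm_integral_le_of_norm_le
    ((integrableOn_Ioi_rpow_of_lt (by linarith) ht).const_mul _) hbound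

end SingularKernel

section IntegrationByParts

variable {α : ℝ} {L : ℝ≥0} {F g : ℝ → ℝ}

theorem intervalIntegrable_rpow_mul_sub (hα0 : 0 < α) (hF : LipschitzWith L F) (t : ℝ) {b : ℝ}
    (hb : 0 ≤ b) : IntervalIntegrable (fun u => u ^ (α - 2) * (F (t - u) - F t)) volume 0 b := by
  have := (intervalIntegrable_rpow' (by linarith : (-1 : ℝ) < α - 1) (a := 0) (b := b)).const_mul L
  rw [intervalIntegrable_iff_integrableOn_Ioc_of_le hb] at this ⊢
  refine this.mono' (aestronglyMeasurable_rpow_mul_sub hF.continuous t (fun u hu => hu.1)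
    measurableSet_Ioc) ?_
  filter_upwards [ae_restrict_mem measurableSet_Ioc] with u hu
  exact abs_rpow_mul_sub_le_of_lipschitzWith hF t hu.1

theorem continuousOn_rpow_mul_sub (hα0 : 0 < α) (hF : LipschitzWith L F) (t : ℝ) :
    ContinuousOn (fun x => x ^ (α - 1) * (F t - F (t - x))) (Ici 0) := by
  intro x hx
  rcases (mem_Ici.1 hx).eq_or_lt with rfl | hx0
  · -- the increment of `F` is `O(x)`, which beats the singularity `x ^ (α - 1)`
    have hlim : Tendsto (fun x : ℝ => L * x ^ α) (𝓝[Ici 0] 0) (𝓝 0) := by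
      simpa [Real.zero_rpow hα0.ne'] using
        ((Real.continuousAt_rpow_const 0 α (Or.inr hα0.le)).tendsto.const_mul (L : ℝ)).mono_left
          nhdsWithin_le_nhds
    refine (squeeze_zero_norm' ?_ hlim).trans (by simp)
    filter_upwards [self_mem_nhdsWithin] with x (hx : 0 ≤ x)
    rw [norm_mul, Real.norm_of_nonneg (Real.rpow_nonneg hx _)]
    rcases hx.eq_or_lt with rfl | hx0
    · simp [Real.zero_rpow hα0.ne']
    calc x ^ (α - 1) * ‖F t - F (t - x)‖ ≤ x ^ (α - 1) * (L * x) := by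
          gcongr; simpa [abs_of_pos hx0] using hF.norm_sub_le t (t - x)
      _ = L * x ^ α := by rw [Real.rpow_sub_one hx0.ne']; field_simp
  · exact ((Real.continuousAt_rpow_const x _ (Or.inl hx0.ne')).mul
      (by have := hF.continuous; fun_prop)).continuousWithinAt

theorem integral_rpow_mul_comp_sub_eq (hα0 : 0 < α) (hF : LipschitzWith L F)
    (hF' : ∀ x, HasDerivAt F (g x) x) (hg : Continuous g) {t : ℝ} (ht : 0 ≤ t) :
    ∫ u in 0..t, u ^ (α - 1) * g (t - u) =
      t ^ (α - 1) * (F t - F 0) + (α - 1) * ∫ u in 0..t, u ^ (α - 2) * (F (t - u) - F t) := by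
  have hderiv : ∀ x ∈ Ioo 0 t, HasDerivAt (fun x => x ^ (α - 1) * (F t - F (t - x)))
      (-((α - 1) * (x ^ (α - 2) * (F (t - x) - F t))) + x ^ (α - 1) * g (t - x)) x := by
    intro x hx
    have hpow := Real.hasDerivAt_rpow_const (p := α - 1) (Or.inl hx.1.ne')
    have hinc := ((hF' (t - x)).comp x ((hasDerivAt_id x).const_sub t)).const_sub (F t)
    refine (hpow.mul hinc).congr_deriv ?_
    rw [Function.comp_apply, show α - 1 - 1 = α - 2 by ring]
    ring
  have hint₁ : IntervalIntegrable (fun u => u ^ (α - 1) * g (t - u)) volume 0 t :=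
    (intervalIntegrable_rpow' (by linarith)).mul_continuousOn (by fun_prop)
  have hint₂ : IntervalIntegrable (fun u => -((α - 1) * (u ^ (α - 2) * (F (t - u) - F t))))
      volume 0 t := ((intervalIntegrable_rpow_mul_sub hα0 hF t ht).const_mul (α - 1)).neg
  have hFTC := integral_eq_sub_of_hasDerivAt_of_le ht
    ((continuousOn_rpow_mul_sub hα0 hF t).mono Icc_subset_Ici_self) hderiv (hint₂.add hint₁)
  rw [integral_add hint₂ hint₁, intervalIntegral.integral_neg,
    intervalIntegral.integral_const_mul] at hFTC
  simp only [sub_self, sub_zero, mul_zero] at hFTC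
  linarith

end IntegrationByParts

section Asymptotics

variable {α B : ℝ} {L : ℝ≥0} {F g : ℝ → ℝ}

theorem tendsto_integral_rpow_sub_mul_sub (hα0 : 0 < α) (hα1 : α < 1) (hF : LipschitzWith L F)
    (hB : ∀ x, |F x| ≤ B) (hF' : ∀ x, HasDerivAt F (g x) x) (hg : Continuous g) :
    Tendsto (fun t => (∫ s in 0..t, (t - s) ^ (α - 1) * g s) -
      (α - 1) * ∫ u in Ioi 0, u ^ (α - 2) * (F (t - u) - F t)) atTop (𝓝 0) := by
  have hdecomp : ∀ t, 0 < t → (∫ s in 0..t, (t - s) ^ (α - 1) * g s) -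
      (α - 1) * (∫ u in Ioi 0, u ^ (α - 2) * (F (t - u) - F t)) =
      t ^ (α - 1) * (F t - F 0) - (α - 1) * ∫ u in Ioi t, u ^ (α - 2) * (F (t - u) - F t) := by
    intro t ht
    have hsubst : ∫ s in 0..t, (t - s) ^ (α - 1) * g s = ∫ u in 0..t, u ^ (α - 1) * g (t - u) := by
      simpa using integral_comp_sub_left (a := 0) (b := t) (fun u => u ^ (α - 1) * g (t - u)) t
    rw [hsubst, integral_rpow_mul_comp_sub_eq hα0 hF hF' hg ht.le,
      ← integral_Ioi_sub_Ioi (integrableOn_Ioi_rpow_mul_sub hα0 hα1 hF hB t) ht.le]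
    ring
  have hbound : ∀ t, 0 < t → |t ^ (α - 1) * (F t - F 0) -
      (α - 1) * ∫ u in Ioi t, u ^ (α - 2) * (F (t - u) - F t)| ≤ 4 * B * t ^ (α - 1) := by
    intro t ht
    have htpow : 0 ≤ t ^ (α - 1) := Real.rpow_nonneg ht.le _
    have hinc : |F t - F 0| ≤ 2 * B := by linarith [abs_sub (F t) (F 0), hB t, hB 0]
    have htail := abs_integral_Ioi_rpow_mul_sub_le hα1 hB ht
    calc _ ≤ |t ^ (α - 1) * (F t - F 0)| +
          |(α - 1) * ∫ u in Ioi t, u ^ (α - 2) * (F (t - u) - F t)| := abs_sub _ _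
      _ = t ^ (α - 1) * |F t - F 0| +
          (1 - α) * |∫ u in Ioi t, u ^ (α - 2) * (F (t - u) - F t)| := by
        rw [abs_mul, abs_mul, abs_of_nonneg htpow, abs_of_neg (by linarith : α - 1 < 0), neg_sub]
      _ ≤ t ^ (α - 1) * (2 * B) + (1 - α) * (2 * B / (1 - α) * t ^ (α - 1)) := by gcongr
      _ = 4 * B * t ^ (α - 1) := by field_simp [show 1 - α ≠ 0 by linarith]; ring
  have hdecay : Tendsto (fun t : ℝ => 4 * B * t ^ (α - 1)) atTop (𝓝 0) := by
    simpa [neg_sub] using (tendsto_rpow_neg_atTop (by linarith : 0 < 1 - α)).const_mul (4 * B)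
  refine squeeze_zero_norm' ?_ hdecay
  filter_upwards [eventually_gt_atTop 0] with t ht
  rw [Real.norm_eq_abs, hdecomp t ht]
  exact hbound t ht

theorem integral_rpow_sub_mul_add_const (hα0 : 0 < α) (hg : Continuous g) (c t : ℝ) :
    ∫ s in 0..t, (t - s) ^ (α - 1) * (g s + c) =
      (∫ s in 0..t, (t - s) ^ (α - 1) * g s) + c * (t ^ α / α) := by
  have hker : IntervalIntegrable (fun s => (t - s) ^ (α - 1)) volume 0 t := by
    simpa using ((intervalIntegrable_rpow' (by linarith : (-1 : ℝ) < α - 1)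
      (a := 0) (b := t)).comp_sub_left t).symm
  have hpow : ∫ s in 0..t, (t - s) ^ (α - 1) = t ^ α / α := by
    rw [integral_comp_sub_left (fun u => u ^ (α - 1)), sub_self, sub_zero,
      integral_rpow (Or.inl (by linarith)), sub_add_cancel, Real.zero_rpow hα0.ne', sub_zero]
  simp only [mul_add]
  rw [integral_add (hker.mul_continuousOn hg.continuousOn) (hker.mul_const c),
    intervalIntegral.integral_mul_const, hpow, mul_comm]

end Asymptotics

theorem exists_periodic_tendsto_integral_rpow_sub_mul_sub {T : ℝ} (hT : T ≠ 0) {f : ℝ → ℝ}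
    (hf : Continuous f) (hper : Function.Periodic f T) {α : ℝ} (hα0 : 0 < α) (hα1 : α < 1) :
    ∃ Φ : ℝ → ℝ, Continuous Φ ∧ Function.Periodic Φ T ∧
      Tendsto (fun t => (∫ s in 0..t, (t - s) ^ (α - 1) * f s) -
        (∫ x in 0..T, f x) / T * (t ^ α / α) - Φ t) atTop (𝓝 0) := by
  set c := (∫ x in 0..T, f x) / T
  set g := fun x => f x - c
  have hg : Continuous g := by fun_prop
  have hgper : Function.Periodic g T := fun x => by simp only [g, hper x]
  have hgmean : ∫ x in 0..T, g x = 0 := by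
    simp only [g, c]
    rw [integral_sub (hf.intervalIntegrable 0 T) intervalIntegrable_const,
      intervalIntegral.integral_const, sub_zero, smul_eq_mul, mul_div_cancel₀ _ hT, sub_self]
  set F := fun x => ∫ u in 0..x, g u
  have hF' : ∀ x, HasDerivAt F (g x) x := fun x => (hg.integral_hasStrictDerivAt 0 x).hasDerivAt
  have hFper : Function.Periodic F T :=
    hgper.periodic_primitive (fun a b => hg.intervalIntegrable a b) hgmean
  obtain ⟨C, hC⟩ := hgper.exists_abs_le_of_continuous hT hg
  have hFlip : LipschitzWith C.toNNReal F :=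
    lipschitzWith_of_nnnorm_deriv_le (fun x => (hF' x).differentiableAt) fun x => by
      rw [(hF' x).deriv, ← NNReal.coe_le_coe, coe_nnnorm]
      exact (hC x).trans (Real.le_coe_toNNReal C)
  obtain ⟨B, hB⟩ := hFper.exists_abs_le_of_continuous hT hFlip.continuous
  refine ⟨fun t => (α - 1) * ∫ u in Ioi 0, u ^ (α - 2) * (F (t - u) - F t),
    continuous_const.mul (continuous_integral_Ioi_rpow_mul_sub hα0 hα1 hFlip hB),
    fun t => by simp only [add_sub_right_comm t T, hFper _], ?_⟩
  refine (tendsto_integral_rpow_sub_mul_sub hα0 hα1 hFlip hB hF' hg).congr fun t => ?_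
  have hfg : ∫ s in 0..t, (t - s) ^ (α - 1) * f s = ∫ s in 0..t, (t - s) ^ (α - 1) * (g s + c) := by
    simp only [g, sub_add_cancel]
  rw [hfg, integral_rpow_sub_mul_add_const hα0 hg c t]
  ring

theorem eq_zero_of_eventually_abs_mul_rpow_le {a α M : ℝ} (hα : 0 < α)
    (h : ∀ᶠ t in atTop, |a * t ^ α| ≤ M) : a = 0 := by
  by_contra ha
  have hgrowth : Tendsto (fun t => |a| * t ^ α) atTop atTop :=
    (tendsto_rpow_atTop hα).const_mul_atTop (abs_pos.2 ha)
  obtain ⟨t, hle, hgt, ht⟩ :=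
    (h.and ((hgrowth.eventually_gt_atTop M).and (eventually_gt_atTop 0))).exists
  rw [abs_mul, abs_of_pos (Real.rpow_pos_of_pos ht α)] at hle
  linarith

/-- If `f` is continuous and `T`-periodic, `α ∈ (0,1)`, and `I^α f` is bounded on
`(0,∞)`, then `I^α f` is asymptotically `T`-periodic: there is a continuous
`T`-periodic `Φ` with `I^α f (t) - Φ(t) → 0` as `t → +∞`. -/
theorem rl_integral_asymptotically_periodic (T : ℝ) (hT : 0 < T)
    (f : ℝ → ℝ) (hf : Continuous f) (hper : Function.Periodic f T)
    (α : ℝ) (hα : α ∈ Set.Ioo (0 : ℝ) 1)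
    (Iαf : ℝ → ℝ)
    (hIαf : ∀ t : ℝ, Iαf t = (1 / Real.Gamma α) * ∫ s in (0 : ℝ)..t, (t - s) ^ (α - 1) * f s)
    (hbdd : ∃ M : ℝ, ∀ t ∈ Ioi (0 : ℝ), |Iαf t| ≤ M) :
    ∃ Φ : ℝ → ℝ, Continuous Φ ∧ Function.Periodic Φ T ∧
      Tendsto (fun t : ℝ => Iαf t - Φ t) atTop (nhds 0) := by
  obtain ⟨hα0, hα1⟩ := hα
  obtain ⟨M, hM⟩ := hbdd
  obtain ⟨Φ, hΦc, hΦper, hΦ⟩ :=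
    exists_periodic_tendsto_integral_rpow_sub_mul_sub hT.ne' hf hper hα0 hα1
  obtain ⟨C, hC⟩ := hΦper.exists_abs_le_of_continuous hT.ne' hΦc
  set a := (∫ x in 0..T, f x) / T
  have hΓ : 0 < Real.Gamma α := Real.Gamma_pos_of_pos hα0
  have hJ : ∀ t, ∫ s in 0..t, (t - s) ^ (α - 1) * f s = Real.Gamma α * Iαf t := fun t => by
    rw [hIαf]; field_simp
  -- a bounded function cannot grow like `t ^ α`, so `f` has mean zero
  have ha : a = 0 := by
    refine (div_eq_zero_iff.1 (eq_zero_of_eventually_abs_mul_rpow_le hα0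
      (M := Real.Gamma α * M + C + 1) ?_)).resolve_right hα0.ne'
    filter_upwards [eventually_gt_atTop 0, Metric.tendsto_nhds.1 hΦ 1 one_pos] with t ht hE
    rw [Real.dist_0_eq_abs, hJ, abs_lt] at hE
    rw [show a / α * t ^ α = a * (t ^ α / α) by ring, abs_le]
    have hI := abs_le.1 (hM t ht)
    have hΦt := abs_le.1 (hC t)
    constructor <;> nlinarith
  refine ⟨fun t => 1 / Real.Gamma α * Φ t, continuous_const.mul hΦc,
    fun t => by simp only [hΦper t], ?_⟩
  have hlim := hΦ.const_mul (1 / Real.Gamma α)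
  simp only [hJ, ha, zero_mul, sub_zero, mul_zero] at hlim
  exact hlim.congr fun t => by field_simp
end

section
/- Let T > 0, n ≥ 1 a natural number, α ∈ (n−1, n), and let f : ℝ → ℝ be an n-times continuously differentiable T-periodic function. Define the Caputo fractional derivative ᶜD^α f(t) = (1/Γ(n−α)) ∫₀ᵗ (t−s)^{n−α−1} f^{(n)}(s) ds for t > 0. If ᶜD^α f is bounded on (0,∞), then ᶜD^α f is asymptotically T-periodic: there exists a continuous T-periodic function Φ : ℝ → ℝ such that lim_{t→+∞} [ᶜD^α f(t) − Φ(t)] = 0. -/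
open MeasureTheory intervalIntegral Filter Set Topology

/-!
Write `β = n - α - 1 ∈ (-1, 0)`, `g = f⁽ⁿ⁾` and `F = f⁽ⁿ⁻¹⁾`, so that `F` and `g` are continuous
and `T`-periodic with `F' = g`, and `Γ(n - α) ᶜD^α f (t) = ∫₀ᵗ u ^ β g (t - u) du`. Split this
integral at `u = 1` and integrate by parts on `[1, t]` against the bounded primitive `F`: apart
from terms that are `T`-periodic in `t`, only the boundary term `-t ^ β F 0` and the tail
`-β ∫ₜ^∞ u ^ (β - 1) F (t - u) du` remain, and both are `O(t ^ β)`.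
-/

namespace Function.Periodic

theorem exists_abs_le_of_continuous_s13 {h : ℝ → ℝ} {T : ℝ} (hp : Periodic h T) (hT : T ≠ 0)
    (hc : Continuous h) : ∃ C, ∀ x, |h x| ≤ C := by
  obtain ⟨C, hC⟩ := isBounded_iff_forall_norm_le.1 (hp.isBounded_of_continuous hT hc)
  exact ⟨C, fun x => hC _ (mem_range_self x)⟩

variable {𝕜 E : Type*} [NontriviallyNormedField 𝕜] [NormedAddCommGroup E] [NormedSpace 𝕜 E]
  {h : 𝕜 → E} {T : 𝕜}

protected theorem deriv (hp : Periodic h T) : Periodic (deriv h) T := fun x => by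
  rw [← deriv_comp_add_const, funext hp]

protected theorem iteratedDeriv (hp : Periodic h T) (k : ℕ) : Periodic (iteratedDeriv k h) T := by
  induction k with
  | zero => simpa using hp
  | succ k ih => simpa only [iteratedDeriv_succ] using ih.deriv

end Function.Periodic

theorem ContDiff.hasDerivAt_iteratedDeriv {𝕜 E : Type*} [NontriviallyNormedField 𝕜]
    [NormedAddCommGroup E] [NormedSpace 𝕜 E] {f : 𝕜 → E} {k : ℕ} (hf : ContDiff 𝕜 (k + 1) f)
    (x : 𝕜) : HasDerivAt (iteratedDeriv k f) (iteratedDeriv (k + 1) f x) x := by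
  rw [iteratedDeriv_succ]
  exact ((hf.differentiable_iteratedDeriv k (by exact_mod_cast k.lt_succ_self)) x).hasDerivAt

theorem integral_comp_sub_mul_eq_integral_mul_comp_sub (k g : ℝ → ℝ) (t : ℝ) :
    ∫ s in (0:ℝ)..t, k (t - s) * g s = ∫ u in (0:ℝ)..t, k u * g (t - u) := by
  simpa only [sub_sub_cancel, sub_self, sub_zero] using
    integral_comp_sub_left (a := 0) (b := t) (fun u => k u * g (t - u)) t

section Convolution

variable {k h : ℝ → ℝ} {s : Set ℝ} {C : ℝ}

theorem MeasureTheory.IntegrableOn.mul_comp_sub (hk : IntegrableOn k s) (hh : Continuous h)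
    (hC : ∀ x, |h x| ≤ C) (t : ℝ) : IntegrableOn (fun u => k u * h (t - u)) s :=
  hk.mul_bdd (hh.comp (continuous_sub_left t)).aestronglyMeasurable
    (Eventually.of_forall fun u => hC (t - u))

theorem continuous_setIntegral_mul_comp_sub (hk : IntegrableOn k s) (hh : Continuous h)
    (hC : ∀ x, |h x| ≤ C) : Continuous fun t => ∫ u in s, k u * h (t - u) := by
  refine continuous_of_dominated (bound := fun u => |k u| * C)
    (fun t => (hk.mul_comp_sub hh hC t).aestronglyMeasurable)
    (fun t => Eventually.of_forall fun u => ?_) (hk.norm.mul_const C)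
    (Eventually.of_forall fun u => continuous_const.mul (hh.comp (continuous_sub_right u)))
  rw [norm_mul, Real.norm_eq_abs, Real.norm_eq_abs]
  exact mul_le_mul_of_nonneg_left (hC _) (abs_nonneg _)

end Convolution

/-- The limit profile of `t ↦ ∫₀ᵗ u ^ β * g (t - u)` when `g = F'` with `F` periodic: the
conditionally convergent `∫₀^∞ u ^ β * g (t - u)`, split at `1` and integrated by parts on
`[1, ∞)`. -/
noncomputable def asymptoticProfile (β : ℝ) (F g : ℝ → ℝ) (t : ℝ) : ℝ :=
  (∫ u in (0:ℝ)..1, u ^ β * g (t - u)) + F (t - 1) +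
    β * ∫ u in Ioi (1:ℝ), u ^ (β - 1) * F (t - u)

section RpowKernel

variable {β C t : ℝ} {F g : ℝ → ℝ}

theorem abs_integral_Ioi_rpow_mul_le {h : ℝ → ℝ} (hβ : β < 0) (ht : 0 < t)
    (hC : ∀ x, |h x| ≤ C) : |∫ u in Ioi t, u ^ (β - 1) * h u| ≤ C * t ^ β / -β := by
  have hbound : ∀ᵐ u ∂(volume.restrict (Ioi t)), ‖u ^ (β - 1) * h u‖ ≤ u ^ (β - 1) * C := by
    refine (ae_restrict_iff' measurableSet_Ioi).2 (Eventually.of_forall fun u hu => ?_)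
    have hu : 0 ≤ u ^ (β - 1) := Real.rpow_nonneg (ht.trans hu).le _
    rw [norm_mul, Real.norm_of_nonneg hu, Real.norm_eq_abs]
    exact mul_le_mul_of_nonneg_left (hC u) hu
  calc |∫ u in Ioi t, u ^ (β - 1) * h u|
      ≤ ∫ u in Ioi t, u ^ (β - 1) * C :=
        norm_integral_le_of_norm_le
          ((integrableOn_Ioi_rpow_of_lt (by linarith) ht).mul_const C) hbound
    _ = C * t ^ β / -β := by
        rw [MeasureTheory.integral_mul_const, integral_Ioi_rpow_of_lt (by linarith) ht,
          sub_add_cancel]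
        ring

theorem integral_one_rpow_mul_deriv_comp_sub (hF : ∀ x, HasDerivAt F (g x) x) (hg : Continuous g)
    (ht : 0 < t) :
    ∫ u in (1:ℝ)..t, u ^ β * g (t - u)
      = F (t - 1) - t ^ β * F 0 + β * ∫ u in (1:ℝ)..t, u ^ (β - 1) * F (t - u) := by
  have hpos : ∀ x ∈ uIcc 1 t, x ≠ 0 := fun x hx =>
    (lt_of_lt_of_le (lt_min one_pos ht) hx.1).ne'
  have hv : ∀ x, HasDerivAt (fun x => -F (t - x)) (g (t - x)) x := fun x => by
    simpa using ((hF (t - x)).comp x ((hasDerivAt_id x).const_sub t)).fun_neg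
  rw [integral_mul_deriv_eq_deriv_mul
    (fun x hx => Real.hasDerivAt_rpow_const (Or.inl (hpos x hx))) (fun x _ => hv x)
    (continuousOn_const.mul
      (continuousOn_id.rpow_const fun x hx => Or.inl (hpos x hx))).intervalIntegrable
    ((hg.comp (continuous_sub_left t)).intervalIntegrable _ _)]
  simp only [sub_self, Real.one_rpow, mul_neg, mul_assoc, intervalIntegral.integral_neg,
    intervalIntegral.integral_const_mul]
  ring

theorem integral_rpow_mul_comp_sub_sub_asymptoticProfile (hβ₁ : -1 < β) (hβ₀ : β < 0)
    (hF : ∀ x, HasDerivAt F (g x) x) (hg : Continuous g) (hC : ∀ x, |F x| ≤ C) (ht : 1 ≤ t) :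
    (∫ u in (0:ℝ)..t, u ^ β * g (t - u)) - asymptoticProfile β F g t
      = -(t ^ β * F 0) - β * ∫ u in Ioi t, u ^ (β - 1) * F (t - u) := by
  have hFc : Continuous F := continuous_iff_continuousAt.2 fun x => (hF x).continuousAt
  have hnear : ∀ a b, IntervalIntegrable (fun u => u ^ β * g (t - u)) volume a b := fun _ _ =>
    (intervalIntegrable_rpow' hβ₁).mul_continuousOn (hg.comp (continuous_sub_left t)).continuousOn
  have hfar : ∀ a, 0 < a → IntegrableOn (fun u => u ^ (β - 1) * F (t - u)) (Ioi a) :=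
    fun a ha => (integrableOn_Ioi_rpow_of_lt (by linarith) ha).mul_comp_sub hFc hC t
  rw [← integral_add_adjacent_intervals (hnear 0 1) (hnear 1 t),
    integral_one_rpow_mul_deriv_comp_sub hF hg (by linarith), asymptoticProfile,
    ← integral_interval_add_Ioi (hfar 1 one_pos) (hfar t (by linarith))]
  ring

theorem tendsto_integral_rpow_mul_comp_sub_sub_asymptoticProfile (hβ₁ : -1 < β) (hβ₀ : β < 0)
    (hF : ∀ x, HasDerivAt F (g x) x) (hg : Continuous g) (hC : ∀ x, |F x| ≤ C) :
    Tendsto (fun t => (∫ u in (0:ℝ)..t, u ^ β * g (t - u)) - asymptoticProfile β F g t)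
      atTop (𝓝 0) := by
  have hdecay : Tendsto (fun t : ℝ => 2 * C * t ^ β) atTop (𝓝 0) := by
    simpa using (tendsto_rpow_neg_atTop (neg_pos.2 hβ₀)).const_mul (2 * C)
  refine squeeze_zero_norm' ((eventually_ge_atTop 1).mono fun t ht => ?_) hdecay
  have ht₀ : 0 < t := by linarith
  have htβ : 0 ≤ t ^ β := Real.rpow_nonneg ht₀.le β
  rw [integral_rpow_mul_comp_sub_sub_asymptoticProfile hβ₁ hβ₀ hF hg hC ht, Real.norm_eq_abs]
  set I := ∫ u in Ioi t, u ^ (β - 1) * F (t - u)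
  have hboundary : |t ^ β * F 0| ≤ C * t ^ β := by
    rw [abs_mul, abs_of_nonneg htβ, mul_comm]
    exact mul_le_mul_of_nonneg_right (hC 0) htβ
  have htail : |β * I| ≤ C * t ^ β := by
    rw [abs_mul, abs_of_neg hβ₀]
    calc -β * |I| ≤ -β * (C * t ^ β / -β) :=
          mul_le_mul_of_nonneg_left (abs_integral_Ioi_rpow_mul_le hβ₀ ht₀ fun u => hC (t - u))
            (by linarith)
      _ = C * t ^ β := by field_simp [hβ₀.ne]
  have := abs_sub (-(t ^ β * F 0)) (β * I)
  rw [abs_neg] at this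
  linarith

theorem continuous_asymptoticProfile {Cg CF : ℝ} (hβ₁ : -1 < β) (hβ₀ : β < 0)
    (hg : Continuous g) (hCg : ∀ x, |g x| ≤ Cg) (hF : Continuous F) (hCF : ∀ x, |F x| ≤ CF) :
    Continuous (asymptoticProfile β F g) := by
  have hnear : Continuous fun t => ∫ u in (0:ℝ)..1, u ^ β * g (t - u) := by
    simpa only [integral_of_le zero_le_one] using
      continuous_setIntegral_mul_comp_sub (intervalIntegrable_rpow' hβ₁ (a := 0) (b := 1)).1 hg hCg
  have hfar := continuous_setIntegral_mul_comp_sub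
    (integrableOn_Ioi_rpow_of_lt (by linarith : β - 1 < -1) one_pos) hF hCF
  exact (hnear.add (hF.comp (continuous_sub_right 1))).add (continuous_const.mul hfar)

theorem Function.Periodic.asymptoticProfile {T : ℝ} (hF : Periodic F T) (hg : Periodic g T) :
    Periodic (_root_.asymptoticProfile β F g) T := fun t => by
  simp only [_root_.asymptoticProfile, add_sub_right_comm t T, hF _, hg _]

end RpowKernel

theorem caputo_derivative_asymptotically_periodic_general (T : ℝ) (hT : 0 < T)
    (n : ℕ) (hn : 1 ≤ n)
    (α : ℝ) (hα : α ∈ Set.Ioo ((n : ℝ) - 1) (n : ℝ))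
    (f : ℝ → ℝ) (hf : ContDiff ℝ n f) (hper : Function.Periodic f T)
    (cD : ℝ → ℝ)
    (hcD : ∀ t : ℝ, cD t =
      (1 / Real.Gamma ((n : ℝ) - α)) *
        ∫ s in (0 : ℝ)..t, (t - s) ^ ((n : ℝ) - α - 1) * iteratedDeriv n f s) :
    ∃ Φ : ℝ → ℝ, Continuous Φ ∧ Function.Periodic Φ T ∧
      Tendsto (fun t : ℝ => cD t - Φ t) atTop (nhds 0) := by
  obtain ⟨k, rfl⟩ : ∃ k, n = k + 1 := ⟨n - 1, by omega⟩
  set β : ℝ := ((k + 1 : ℕ) : ℝ) - α - 1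
  have hβ₁ : -1 < β := by linarith [hα.2]
  have hβ₀ : β < 0 := by linarith [hα.1]
  set F := iteratedDeriv k f
  set g := iteratedDeriv (k + 1) f
  have hF : ∀ x, HasDerivAt F (g x) x :=
    (by exact_mod_cast hf : ContDiff ℝ (k + 1) f).hasDerivAt_iteratedDeriv
  have hFc : Continuous F := hf.continuous_iteratedDeriv k (by norm_cast; omega)
  have hg : Continuous g := hf.continuous_iteratedDeriv _ le_rfl
  obtain ⟨CF, hCF⟩ := (hper.iteratedDeriv k).exists_abs_le_of_continuous_s13 hT.ne' hFc
  obtain ⟨Cg, hCg⟩ := (hper.iteratedDeriv (k + 1)).exists_abs_le_of_continuous_s13 hT.ne' hg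
  set c := 1 / Real.Gamma (((k + 1 : ℕ) : ℝ) - α)
  refine ⟨fun t => c * asymptoticProfile β F g t,
    continuous_const.mul (continuous_asymptoticProfile hβ₁ hβ₀ hg hCg hFc hCF),
    fun t => congrArg (c * ·) ((hper.iteratedDeriv k).asymptoticProfile (hper.iteratedDeriv _) t),
    ?_⟩
  simp only [hcD, integral_comp_sub_mul_eq_integral_mul_comp_sub (· ^ β), ← mul_sub]
  simpa using
    (tendsto_integral_rpow_mul_comp_sub_sub_asymptoticProfile hβ₁ hβ₀ hF hg hCF).const_mul c

/-- If `f` is an `n`-times continuously differentiable `T`-periodic function,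
`α ∈ (n-1, n)`, and the Caputo fractional derivative
`ᶜD^α f (t) = (1/Γ(n-α)) ∫₀ᵗ (t-s)^{n-α-1} f⁽ⁿ⁾(s) ds` is bounded on `(0,∞)`,
then `ᶜD^α f` is asymptotically `T`-periodic: there is a continuous `T`-periodic `Φ`
with `ᶜD^α f (t) - Φ(t) → 0` as `t → +∞`. -/
theorem caputo_derivative_asymptotically_periodic (T : ℝ) (hT : 0 < T)
    (n : ℕ) (hn : 1 ≤ n)
    (α : ℝ) (hα : α ∈ Set.Ioo ((n : ℝ) - 1) (n : ℝ))
    (f : ℝ → ℝ) (hf : ContDiff ℝ n f) (hper : Function.Periodic f T)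
    (cD : ℝ → ℝ)
    (hcD : ∀ t : ℝ, cD t =
      (1 / Real.Gamma ((n : ℝ) - α)) *
        ∫ s in (0 : ℝ)..t, (t - s) ^ ((n : ℝ) - α - 1) * iteratedDeriv n f s)
    (hbdd : ∃ M : ℝ, ∀ t ∈ Ioi (0 : ℝ), |cD t| ≤ M) :
    ∃ Φ : ℝ → ℝ, Continuous Φ ∧ Function.Periodic Φ T ∧
      Tendsto (fun t : ℝ => cD t - Φ t) atTop (nhds 0) :=
  caputo_derivative_asymptotically_periodic_general T hT n hn α hα f hf hper cD hcD
end

section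
/- Let T > 0, let f : ℝ → ℝ be a continuous T-periodic function with ∫₀ᵀ f(t) dt = 0, let α ∈ (0,1), and set c = ∫₀ᵀ max(f(t), 0) dt. Then for every t > 0 and every natural number n ≥ 1, −c · t^{α−1} ≤ ∫_{−nT}^{0} (t−s)^{α−1} f(s) ds ≤ c · t^{α−1}. -/
open MeasureTheory intervalIntegral Set

/-- For a continuous `T`-periodic `f` with zero mean, `α ∈ (0,1)` and
`c = ∫₀ᵀ f⁺`, the integral `∫_{-nT}^{0} (t-s)^{α-1} f(s) ds` lies between
`-c t^{α-1}` and `c t^{α-1}` for all `t > 0` and `n ≥ 1`. -/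
theorem tail_integral_bounds (T : ℝ) (hT : 0 < T)
    (f : ℝ → ℝ) (hf : Continuous f) (hper : Function.Periodic f T)
    (hmean : (∫ t in (0 : ℝ)..T, f t) = 0)
    (α : ℝ) (hα : α ∈ Set.Ioo (0 : ℝ) 1)
    (c : ℝ) (hc : c = ∫ t in (0 : ℝ)..T, max (f t) 0) :
    ∀ t : ℝ, 0 < t → ∀ n : ℕ, 1 ≤ n →
      -(c * t ^ (α - 1)) ≤ (∫ s in (-(n : ℝ) * T)..(0 : ℝ), (t - s) ^ (α - 1) * f s) ∧
      (∫ s in (-(n : ℝ) * T)..(0 : ℝ), (t - s) ^ (α - 1) * f s) ≤ c * t ^ (α - 1) := by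
  obtain ⟨hα0, hα1⟩ := hα
  -- the primitive of f
  set G : ℝ → ℝ := fun x => ∫ s in (0:ℝ)..x, f s with hG
  have hGderiv : ∀ x : ℝ, HasDerivAt G (f x) x := fun x =>
    intervalIntegral.integral_hasDerivAt_right (hf.intervalIntegrable 0 x)
      (hf.stronglyMeasurable.stronglyMeasurableAtFilter) hf.continuousAt
  have hGcont : Continuous G := by
    have : ∀ x, ContinuousAt G x := fun x => (hGderiv x).continuousAt
    exact continuous_iff_continuousAt.mpr this
  -- G is T-periodic
  have hGper : Function.Periodic G T := by
    intro x
    have h1 : (∫ s in (0:ℝ)..x, f s) + ∫ s in x..(x + T), f s = ∫ s in (0:ℝ)..(x+T), f s :=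
      intervalIntegral.integral_add_adjacent_intervals (hf.intervalIntegrable _ _)
        (hf.intervalIntegrable _ _)
    have h2 : (∫ s in x..(x + T), f s) = ∫ s in (0:ℝ)..(0 + T), f s :=
      hper.intervalIntegral_add_eq x 0
    simp only [zero_add] at h2
    rw [h2, hmean] at h1
    simpa [hG] using h1.symm
  have hc0 : 0 ≤ c := by
    rw [hc]
    exact intervalIntegral.integral_nonneg hT.le (fun x _ => le_max_right _ _)
  -- |G| ≤ c on [0, T], hence everywhere
  have hGboundIco : ∀ y ∈ Set.Ico (0:ℝ) T, -c ≤ G y ∧ G y ≤ c := by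
    intro y hy
    constructor
    · -- G y = - ∫_y^T f ≥ -c
      have hsplit : (∫ s in (0:ℝ)..y, f s) + ∫ s in y..T, f s = ∫ s in (0:ℝ)..T, f s :=
        intervalIntegral.integral_add_adjacent_intervals (hf.intervalIntegrable _ _)
          (hf.intervalIntegrable _ _)
      rw [hmean] at hsplit
      have hGy : G y = -∫ s in y..T, f s := by
        simp only [hG]; linarith [hsplit]
      rw [hGy, hc]
      have h1 : (∫ s in y..T, f s) ≤ ∫ s in y..T, max (f s) 0 :=
        intervalIntegral.integral_mono_on hy.2.le (hf.intervalIntegrable _ _)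
          ((hf.max continuous_const).intervalIntegrable _ _)
          (fun x _ => le_max_left _ _)
      have h2 : (∫ s in y..T, max (f s) 0) ≤ ∫ s in (0:ℝ)..T, max (f s) 0 :=
        intervalIntegral.integral_mono_interval hy.1 hy.2.le le_rfl
          (Filter.Eventually.of_forall fun x => le_max_right _ _)
          ((hf.max continuous_const).intervalIntegrable _ _)
      linarith
    · rw [hc]
      have h1 : (∫ s in (0:ℝ)..y, f s) ≤ ∫ s in (0:ℝ)..y, max (f s) 0 :=
        intervalIntegral.integral_mono_on hy.1 (hf.intervalIntegrable _ _)
          ((hf.max continuous_const).intervalIntegrable _ _)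
          (fun x _ => le_max_left _ _)
      have h2 : (∫ s in (0:ℝ)..y, max (f s) 0) ≤ ∫ s in (0:ℝ)..T, max (f s) 0 :=
        intervalIntegral.integral_mono_interval le_rfl hy.1 hy.2.le
          (Filter.Eventually.of_forall fun x => le_max_right _ _)
          ((hf.max continuous_const).intervalIntegrable _ _)
      exact le_trans h1 h2
  have hGbound : ∀ x : ℝ, -c ≤ G x ∧ G x ≤ c := by
    intro x
    obtain ⟨y, hy, hxy⟩ := hGper.exists_mem_Ico₀ hT x
    rw [hxy]
    exact hGboundIco y hy
  intro t ht n hn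
  set a : ℝ := -(n : ℝ) * T with ha
  have ha0 : a ≤ 0 := by
    have : (0:ℝ) ≤ (n : ℝ) * T := by positivity
    simp [ha]; linarith
  have hGa : G a = 0 := by
    have := hGper.sub_nat_mul_eq (x := (0:ℝ)) n
    have h0 : G 0 = 0 := by simp [hG]
    have : G (0 - (n:ℝ) * T) = G 0 := this
    rw [h0] at this
    simpa [ha, neg_mul] using this
  have hG0 : G 0 = 0 := by simp [hG]
  -- derivative of u(x) = (t - x)^(α-1)
  set u : ℝ → ℝ := fun x => (t - x) ^ (α - 1) with hu
  set u' : ℝ → ℝ := fun x => (1 - α) * (t - x) ^ (α - 2) with hu'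
  have htx : ∀ x ∈ Set.uIcc a (0:ℝ), 0 < t - x := by
    intro x hx
    rw [Set.uIcc_of_le ha0] at hx
    have := hx.2
    linarith
  have huderiv : ∀ x ∈ Set.uIcc a (0:ℝ), HasDerivAt u (u' x) x := by
    intro x hx
    have h1 : HasDerivAt (fun y : ℝ => t - y) (-1) x := (hasDerivAt_id x).const_sub t
    have h2 : HasDerivAt (fun y : ℝ => y ^ (α - 1)) ((α - 1) * (t - x) ^ (α - 1 - 1)) (t - x) :=
      Real.hasDerivAt_rpow_const (Or.inl (htx x hx).ne')
    have h3 := h2.comp x h1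
    have heq : ((α - 1) * (t - x) ^ (α - 1 - 1)) * (-1) = u' x := by
      rw [show α - 1 - 1 = α - 2 by ring]; simp [hu']; ring
    rw [heq] at h3
    exact h3
  -- continuity of u' on the interval
  have hu'cont : ContinuousOn u' (Set.uIcc a (0:ℝ)) := by
    apply ContinuousOn.mul continuousOn_const
    apply ContinuousOn.rpow_const
    · exact (continuous_const.sub continuous_id).continuousOn
    · intro x hx
      exact Or.inl (htx x hx).ne'
  have hu'int : IntervalIntegrable u' volume a 0 := hu'cont.intervalIntegrable
  -- integration by parts
  have hibp : (∫ s in a..(0:ℝ), u s * f s)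
      = u 0 * G 0 - u a * G a - ∫ s in a..(0:ℝ), u' s * G s := by
    exact intervalIntegral.integral_mul_deriv_eq_deriv_mul huderiv
      (fun x _ => hGderiv x) hu'int (hf.intervalIntegrable _ _)
  rw [hG0, hGa] at hibp
  simp only [mul_zero, sub_zero, zero_sub] at hibp
  -- compute ∫ u'
  have hu'sum : (∫ s in a..(0:ℝ), u' s) = u 0 - u a :=
    intervalIntegral.integral_eq_sub_of_hasDerivAt huderiv hu'int
  have hu'nonneg : ∀ x ∈ Set.Icc a (0:ℝ), 0 ≤ u' x := by
    intro x hx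
    apply mul_nonneg (by linarith)
    exact Real.rpow_nonneg (by have : x ≤ 0 := hx.2; linarith) _
  have hu'Gint : IntervalIntegrable (fun s => u' s * G s) volume a 0 :=
    (hu'cont.mul hGcont.continuousOn).intervalIntegrable
  have hcu'int : IntervalIntegrable (fun s => c * u' s) volume a 0 :=
    (continuousOn_const.mul hu'cont).intervalIntegrable
  have hncu'int : IntervalIntegrable (fun s => -c * u' s) volume a 0 :=
    (continuousOn_const.mul hu'cont).intervalIntegrable
  -- bound the integral ∫ u' G
  have hupper : (∫ s in a..(0:ℝ), u' s * G s) ≤ c * (u 0 - u a) := by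
    have h1 : (∫ s in a..(0:ℝ), u' s * G s) ≤ ∫ s in a..(0:ℝ), c * u' s := by
      apply intervalIntegral.integral_mono_on ha0 hu'Gint hcu'int
      intro x hx
      have h2 := (hGbound x).2
      have h3 := hu'nonneg x hx
      nlinarith
    have h2 : (∫ s in a..(0:ℝ), c * u' s) = c * (u 0 - u a) := by
      rw [intervalIntegral.integral_const_mul, hu'sum]
    linarith
  have hlower : -(c * (u 0 - u a)) ≤ (∫ s in a..(0:ℝ), u' s * G s) := by
    have h1 : (∫ s in a..(0:ℝ), (-c) * u' s) ≤ ∫ s in a..(0:ℝ), u' s * G s := by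
      apply intervalIntegral.integral_mono_on ha0 hncu'int hu'Gint
      intro x hx
      have h2 := (hGbound x).1
      have h3 := hu'nonneg x hx
      nlinarith
    have h2 : (∫ s in a..(0:ℝ), (-c) * u' s) = -c * (u 0 - u a) := by
      rw [intervalIntegral.integral_const_mul, hu'sum]
    linarith
  -- finally: 0 ≤ u a and u 0 = t^(α-1)
  have hua : 0 ≤ u a := Real.rpow_nonneg (by linarith) _
  have hu00 : u 0 = t ^ (α - 1) := by simp [hu]
  have hkey : 0 ≤ c * u a := mul_nonneg hc0 hua
  constructor
  · rw [hibp]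
    rw [hu00] at hupper
    linarith
  · rw [hibp]
    rw [hu00] at hlower
    linarith
end
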